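/- arXiv:1610.09945 — 9 statements merged into one kernel-verified Lean document; each statement's English description precedes it below -/
import Mathlib

section
/- Let X be a one-sided shift of finite type over a finite alphabet. If x ∈ X is an isolated point of X (in the subspace topology of the product topology), then x is eventually periodic, i.e., there exist n ∈ ℕ₀ and p ∈ ℕ such that σ^(n+p)(x) = σ^n(x). -/
/-- The one-sided shift map on `ℕ → A`. -/
def shift {A : Type*} (x : ℕ → A) : ℕ → A := fun n => x (n + 1)

/-- A finite word appears in the shift space `X` (at position 0; by shift
invariance this captures appearance anywhere). -/
def Appears {A : Type*} (X : Set (ℕ → A)) (w : List A) : Prop :=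
  ∃ x ∈ X, ∀ i : Fin w.length, x i.val = w.get i

/-- `X` is a shift of finite type: for some `m`, words of length `m` can be glued. -/
def IsSFT {A : Type*} (X : Set (ℕ → A)) : Prop :=
  ∃ m : ℕ, 0 < m ∧ ∀ u v w : List A, v.length = m →
    Appears X (u ++ v) → Appears X (v ++ w) → Appears X (u ++ v ++ w)

namespace SFTAux

variable {A : Type*}

/-- The prefix of length `L` of `y`, as a list. -/
def pre (y : ℕ → A) (L : ℕ) : List A := List.ofFn (fun t : Fin L => y t)

@[simp] lemma pre_length (y : ℕ → A) (L : ℕ) : (pre y L).length = L := by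
  simp [pre]

lemma pre_getElem (y : ℕ → A) (L : ℕ) (t : ℕ) (h : t < (pre y L).length) :
    (pre y L)[t] = y t := by
  simp [pre]

lemma pre_congr (y z : ℕ → A) (L : ℕ) (h : ∀ t < L, y t = z t) :
    pre y L = pre z L := by
  apply List.ext_getElem (by simp)
  intro t h1 h2
  rw [pre_getElem, pre_getElem]
  exact h t (by simpa using h1)

lemma pre_add (y : ℕ → A) (a b : ℕ) :
    pre y (a + b) = pre y a ++ pre (fun t => y (a + t)) b := by
  rw [pre, List.ofFn_add]
  rfl

lemma appears_pre_iff (X : Set (ℕ → A)) (y : ℕ → A) (L : ℕ) :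
    Appears X (pre y L) ↔ ∃ z ∈ X, ∀ t < L, z t = y t := by
  constructor
  · rintro ⟨z, hz, h⟩
    exact ⟨z, hz, fun t ht => by simpa [pre_getElem] using h ⟨t, by simpa using ht⟩⟩
  · rintro ⟨z, hz, h⟩
    exact ⟨z, hz, fun t => by simpa [pre_getElem] using h t.val (by simpa using t.isLt)⟩

lemma shift_iterate (x : ℕ → A) (n k : ℕ) : (shift^[n] x) k = x (n + k) := by
  induction n generalizing x k with
  | zero => simp
  | succ n ih =>
    rw [Function.iterate_succ_apply, ih]
    show x (n + k + 1) = x (n + 1 + k)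
    congr 1
    omega

lemma shift_iter_mem {X : Set (ℕ → A)} (hinv : shift '' X = X) {x : ℕ → A}
    (hx : x ∈ X) (n : ℕ) : shift^[n] x ∈ X := by
  induction n with
  | zero => simpa
  | succ n ih =>
    rw [Function.iterate_succ_apply', ← hinv]
    exact ⟨_, ih, rfl⟩

lemma exists_cyl [TopologicalSpace A] {U : Set (ℕ → A)}
    (hU : IsOpen U) {x : ℕ → A} (hx : x ∈ U) :
    ∃ N, ∀ z : ℕ → A, (∀ k < N, z k = x k) → z ∈ U := by
  obtain ⟨I, u, hI, hsub⟩ := isOpen_pi_iff.mp hU x hx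
  refine ⟨(I.sup id) + 1, fun z hz => hsub fun a ha => ?_⟩
  have hlt : a < I.sup id + 1 := Nat.lt_succ_of_le (Finset.le_sup (f := id) ha)
  rw [hz a hlt]
  exact (hI a ha).2

lemma mem_of_approx [TopologicalSpace A] {X : Set (ℕ → A)} (hcl : IsClosed X) (y : ℕ → A)
    (h : ∀ L, ∃ z ∈ X, ∀ k < L, z k = y k) : y ∈ X := by
  rw [← hcl.closure_eq, mem_closure_iff]
  intro o ho hyo
  obtain ⟨N, hN⟩ := exists_cyl ho hyo
  obtain ⟨z, hz, hzy⟩ := h N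
  exact ⟨z, hN z hzy, hz⟩

end SFTAux

/-- If `x` is an isolated point of a one-sided shift of finite type `X`, then `x`
is eventually periodic. -/
theorem stmt0 {A : Type*} [Fintype A] [TopologicalSpace A] [DiscreteTopology A]
    (X : Set (ℕ → A)) (hcl : IsClosed X) (hinv : shift '' X = X) (hsft : IsSFT X)
    (x : ℕ → A) (hx : x ∈ X)
    (hiso : ∃ U : Set (ℕ → A), IsOpen U ∧ U ∩ X = {x}) :
    ∃ (n p : ℕ), 0 < p ∧ shift^[n + p] x = shift^[n] x := by
  obtain ⟨U, hU, hUX⟩ := hiso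
  have hxU : x ∈ U := by
    have hxx : x ∈ U ∩ X := by rw [hUX]; exact rfl
    exact hxx.1
  obtain ⟨N, hN⟩ := SFTAux.exists_cyl hU hxU
  obtain ⟨m, hm, hglue⟩ := hsft
  -- pigeonhole: some `m`-word occurs at infinitely many positions
  obtain ⟨w, hw⟩ := Finite.exists_infinite_fiber (fun n : ℕ => (fun t : Fin m => x (n + t)))
  have hwInf : ((fun n : ℕ => (fun t : Fin m => x (n + t))) ⁻¹' {w}).Infinite :=
    Set.infinite_coe_iff.mp hw
  obtain ⟨i, hiS, hiN⟩ := hwInf.exists_gt N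
  obtain ⟨j, hjS, hij⟩ := hwInf.exists_gt i
  set p := j - i with hp
  have hppos : 0 < p := Nat.sub_pos_of_lt hij
  have hji : j = i + p := by omega
  have hper : ∀ t, t < m → x (i + t + p) = x (i + t) := by
    intro t ht
    have h1 : (fun s : Fin m => x (i + s)) = w := hiS
    have h2 : (fun s : Fin m => x (j + s)) = w := hjS
    have h3 := congrFun (h1.trans h2.symm) ⟨t, ht⟩
    simp only at h3
    rw [show i + t + p = j + t by omega]
    exact h3.symm
  set y : ℕ → A := fun k => if k < i then x k else x (i + (k - i) % p) with hy
  have hyx2 : ∀ k, i ≤ k → k < j + m → x k = x (i + (k - i) % p) := by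
    intro k
    induction k using Nat.strong_induction_on with
    | _ k ih =>
      intro hik hkj
      by_cases hkj' : k < j
      · rw [Nat.mod_eq_of_lt (by omega)]
        congr 1
        omega
      · push_neg at hkj'
        have h1 : x k = x (k - p) := by
          have h := hper (k - p - i) (by omega)
          rw [show i + (k - p - i) + p = k by omega, show i + (k - p - i) = k - p by omega] at h
          exact h
        rw [h1, ih (k - p) (by omega) (by omega) (by omega)]
        congr 2
        rw [show k - i = (k - p - i) + p by omega, Nat.add_mod_right]
  have hyx : ∀ k, k < j + m → y k = x k := by
    intro k hk
    by_cases hki : k < i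
    · simp [hy, hki]
    · simp only [hy]
      rw [if_neg hki]
      exact (hyx2 k (by omega) hk).symm
  have hyper : ∀ k, i ≤ k → y (k + p) = y k := by
    intro k hk
    simp only [hy]
    rw [if_neg (by omega), if_neg (by omega)]
    congr 2
    rw [show k + p - i = (k - i) + p by omega, Nat.add_mod_right]
  have hyperq : ∀ q k, i ≤ k → y (k + q * p) = y k := by
    intro q
    induction q with
    | zero => simp
    | succ q ih =>
      intro k hk
      rw [show k + (q + 1) * p = (k + q * p) + p by ring, hyper _ (by omega), ih k hk]
  have happ : ∀ q, Appears X (SFTAux.pre y (i + q * p + m)) := by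
    intro q
    induction q with
    | zero =>
      rw [show i + 0 * p + m = i + m by ring, SFTAux.appears_pre_iff]
      exact ⟨x, hx, fun t ht => (hyx t (by omega)).symm⟩
    | succ q ih =>
      set a := i + q * p with ha
      set u := SFTAux.pre y a with hu
      set v := SFTAux.pre (fun t => y (a + t)) m with hv
      set w' := SFTAux.pre (fun t => y (a + m + t)) p with hw'
      have huv : SFTAux.pre y (a + m) = u ++ v := SFTAux.pre_add y a m
      have hvw : v ++ w' = SFTAux.pre (fun t => y (a + t)) (m + p) := by
        rw [SFTAux.pre_add (fun t => y (a + t)) m p, hv, hw']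
        congr 1
        exact SFTAux.pre_congr _ _ _ (fun t ht => by rw [Nat.add_assoc])
      have huvw : u ++ v ++ w' = SFTAux.pre y (a + m + p) := by
        rw [SFTAux.pre_add y (a + m) p, ← huv]
      have hAuv : Appears X (u ++ v) := by rw [← huv]; exact ih
      have hAvw : Appears X (v ++ w') := by
        rw [hvw, SFTAux.appears_pre_iff]
        refine ⟨shift^[i] x, SFTAux.shift_iter_mem hinv hx i, fun t ht => ?_⟩
        rw [SFTAux.shift_iterate]
        have h1 : y (a + t) = y (i + t) := by
          rw [ha, show i + q * p + t = (i + t) + q * p by ring]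
          exact hyperq q (i + t) (by omega)
        rw [h1, hyx (i + t) (by omega)]
      have := hglue u v w' (by rw [hv]; simp) hAuv hAvw
      rw [huvw] at this
      rw [show i + (q + 1) * p + m = a + m + p by rw [ha]; ring]
      exact this
  have hyX : y ∈ X := by
    refine SFTAux.mem_of_approx hcl y (fun L => ?_)
    obtain ⟨z, hz, h⟩ := (SFTAux.appears_pre_iff X y _).mp (happ L)
    have hLp : L ≤ L * p := Nat.le_mul_of_pos_right L hppos
    exact ⟨z, hz, fun k hk => h k (by omega)⟩
  have hyU : y ∈ U := hN y (fun k hk => hyx k (by omega))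
  have hyeq : y = x := by
    have : y ∈ U ∩ X := ⟨hyU, hyX⟩
    rw [hUX] at this
    exact this
  refine ⟨i, p, hppos, ?_⟩
  funext k
  rw [SFTAux.shift_iterate, SFTAux.shift_iterate]
  have h := hyper (i + k) (by omega)
  rw [hyeq] at h
  rw [show i + p + k = i + k + p by omega]
  exact h
end

section
/- Let X be a one-sided shift of finite type with shift map σ_X, and let x ∈ X be a point that is not isolated. Suppose U is an open neighbourhood of x, W ⊆ X is open, α : U → W is a homeomorphism, and k, l : U → ℕ₀ are continuous functions with σ^{k(x')}(α(x')) = σ^{l(x')}(x') for all x' ∈ U. Then there is a unique integer n with the property that there exist k₀, l₀ ∈ ℕ₀ with n = l₀ − k₀ and an open set V with x ∈ V ⊆ U such that σ^{k₀}(α(x')) = σ^{l₀}(x') for all x' ∈ V. -/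
/-- `x` is an isolated point of `X`. -/
def IsolatedIn {A : Type*} [TopologicalSpace A] (X : Set (ℕ → A)) (x : ℕ → A) : Prop :=
  ∃ U : Set (ℕ → A), IsOpen U ∧ U ∩ X = {x}


lemma shift_iter {A : Type*} (m : ℕ) (y : ℕ → A) (n : ℕ) :
    shift^[m] y n = y (n + m) := by
  induction m generalizing y n with
  | zero => rfl
  | succ m ih =>
    rw [Function.iterate_succ_apply, ih]
    rfl

lemma isolated_of_eventually_periodic {A : Type*} [TopologicalSpace A] [DiscreteTopology A]
    (X : Set (ℕ → A)) (x : ℕ → A) (hx : x ∈ X)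
    (S : Set (ℕ → A)) (hS : IsOpen S) (hxS : x ∈ S)
    (p t : ℕ) (ht : 0 < t)
    (hper : ∀ y ∈ S ∩ X, ∀ m : ℕ, y (m + p + t) = y (m + p)) :
    IsolatedIn X x := by
  obtain ⟨I, u, hu, hsub⟩ := (isOpen_pi_iff.mp hS) x hxS
  set N := (I.sup id) + 1 + p + t with hN
  refine ⟨⋂ i ∈ Finset.range N, (fun y : ℕ → A => y i) ⁻¹' {x i}, ?_, ?_⟩
  · exact isOpen_biInter_finset fun i _ =>
      (continuous_apply i).isOpen_preimage _ (isOpen_discrete _)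
  · ext y
    simp only [Set.mem_inter_iff, Set.mem_iInter, Set.mem_preimage, Set.mem_singleton_iff,
      Finset.mem_range]
    constructor
    · rintro ⟨hyC, hyX⟩
      have hyS : y ∈ S := hsub (fun i hi => by
        have hiN : i < N := by
          have := Finset.le_sup (f := id) hi
          simp only [id] at this
          omega
        rw [hyC i hiN]; exact (hu i hi).2)
      have hyper := hper y ⟨hyS, hyX⟩
      have hxper := hper x ⟨hxS, hx⟩
      funext n
      induction n using Nat.strong_induction_on with
      | _ n ih =>
        by_cases hn : n < N
        · exact hyC n hn
        · have h1 := hyper (n - (p + t))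
          have h2 := hxper (n - (p + t))
          have hm : (n - (p + t)) + p + t = n := by omega
          have hm' : (n - (p + t)) + p = n - t := by omega
          rw [hm, hm'] at h1 h2
          rw [h1, h2, ih (n - t) (by omega)]
    · rintro rfl
      exact ⟨fun i _ => rfl, hx⟩

/-- If `x` is a non-isolated point of a one-sided shift of finite type `X`,
`U` is an open neighbourhood of `x` in `X`, `W ⊆ X` is open in `X`, `α : U → W`
is a homeomorphism (with inverse `β`), and `k, l : U → ℕ` are continuous with
`σ^{k(x')}(α(x')) = σ^{l(x')}(x')` on `U`, then there is a unique `n ∈ ℤ` such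
that `n = l₀ - k₀` for some `k₀, l₀ ∈ ℕ` and some open `V` with `x ∈ V ⊆ U` on
which `σ^{k₀}(α(x')) = σ^{l₀}(x')`. -/
theorem stmt2 {A : Type*} [Fintype A] [TopologicalSpace A] [DiscreteTopology A]
    (X : Set (ℕ → A)) (hcl : IsClosed X) (hinv : shift '' X = X) (hsft : IsSFT X)
    (x : ℕ → A) (hx : x ∈ X) (hniso : ¬ IsolatedIn X x)
    (U W : Set (ℕ → A)) (hUX : U ⊆ X) (hWX : W ⊆ X)
    (hUopen : ∃ U' : Set (ℕ → A), IsOpen U' ∧ U = U' ∩ X)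
    (hWopen : ∃ W' : Set (ℕ → A), IsOpen W' ∧ W = W' ∩ X)
    (hxU : x ∈ U)
    (α β : (ℕ → A) → (ℕ → A))
    (hα : Set.MapsTo α U W) (hβ : Set.MapsTo β W U)
    (hαβ : ∀ x' ∈ U, β (α x') = x') (hβα : ∀ w ∈ W, α (β w) = w)
    (hαc : ContinuousOn α U) (hβc : ContinuousOn β W)
    (k l : (ℕ → A) → ℕ) (hk : ContinuousOn k U) (hl : ContinuousOn l U)
    (hrel : ∀ x' ∈ U, shift^[k x'] (α x') = shift^[l x'] x') :
    ∃! n : ℤ, ∃ k₀ l₀ : ℕ, n = (l₀ : ℤ) - (k₀ : ℤ) ∧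
      ∃ V : Set (ℕ → A), x ∈ V ∧ V ⊆ U ∧
        (∃ V' : Set (ℕ → A), IsOpen V' ∧ V = V' ∩ X) ∧
        ∀ x' ∈ V, shift^[k₀] (α x') = shift^[l₀] x' := by
  obtain ⟨U', hU'open, hUeq⟩ := hUopen
  have hxU' : x ∈ U' := (hUeq ▸ hxU).1
  have hk1 : ∀ᶠ y in nhdsWithin x U, k y = k x :=
    (hk.continuousWithinAt hxU).eventually
      (Filter.eventually_of_mem (IsOpen.mem_nhds (isOpen_discrete {k x}) rfl) (fun y hy => hy))
  have hl1 : ∀ᶠ y in nhdsWithin x U, l y = l x :=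
    (hl.continuousWithinAt hxU).eventually
      (Filter.eventually_of_mem (IsOpen.mem_nhds (isOpen_discrete {l x}) rfl) (fun y hy => hy))
  obtain ⟨O₁, hO₁open, hxO₁, hO₁sub⟩ := mem_nhdsWithin.mp hk1
  obtain ⟨O₂, hO₂open, hxO₂, hO₂sub⟩ := mem_nhdsWithin.mp hl1
  set V : Set (ℕ → A) := (O₁ ∩ (O₂ ∩ U')) ∩ X with hV
  have hVU : V ⊆ U := fun y hy => hUeq ▸ ⟨hy.1.2.2, hy.2⟩
  have hVk : ∀ y ∈ V, k y = k x := fun y hy => hO₁sub ⟨hy.1.1, hVU hy⟩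
  have hVl : ∀ y ∈ V, l y = l x := fun y hy => hO₂sub ⟨hy.1.2.1, hVU hy⟩
  refine ⟨(l x : ℤ) - (k x : ℤ), ⟨k x, l x, rfl, V, ⟨⟨hxO₁, hxO₂, hxU'⟩, hx⟩, hVU,
    ⟨O₁ ∩ (O₂ ∩ U'), hO₁open.inter (hO₂open.inter hU'open), rfl⟩, ?_⟩, ?_⟩
  · intro x' hx'
    rw [← hVk x' hx', ← hVl x' hx']
    exact hrel x' (hVU hx')
  · rintro n' ⟨a, b, rfl, V₂, hxV₂, hV₂U, ⟨V₂', hV₂'open, hV₂eq⟩, hrel₂⟩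
    by_contra hne'
    have hne : a + l x ≠ k x + b := by
      intro h
      apply hne'
      have : (a : ℤ) + l x = k x + b := by exact_mod_cast h
      linarith
    set c := k x with hc
    set d := l x with hd
    set S : Set (ℕ → A) := O₁ ∩ (O₂ ∩ (U' ∩ V₂')) with hS
    have hSopen : IsOpen S := hO₁open.inter (hO₂open.inter (hU'open.inter hV₂'open))
    have hxS : x ∈ S := ⟨hxO₁, hxO₂, hxU', (hV₂eq ▸ hxV₂).1⟩
    have keyeq : ∀ y ∈ S ∩ X, ∀ n : ℕ, y (n + a + d) = y (n + c + b) := by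
      intro y hy n
      have hyU : y ∈ U := hUeq ▸ ⟨hy.1.2.2.1, hy.2⟩
      have hyV₂ : y ∈ V₂ := hV₂eq ▸ ⟨hy.1.2.2.2, hy.2⟩
      have hky : k y = c := hO₁sub ⟨hy.1.1, hyU⟩
      have hly : l y = d := hO₂sub ⟨hy.1.2.1, hyU⟩
      have h1 := hrel y hyU
      rw [hky, hly] at h1
      have h2 := hrel₂ y hyV₂
      have e1 : ∀ m : ℕ, α y (m + c) = y (m + d) := fun m => by
        have := congrFun h1 m; rwa [shift_iter, shift_iter] at this
      have e2 : ∀ m : ℕ, α y (m + a) = y (m + b) := fun m => by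
        have := congrFun h2 m; rwa [shift_iter, shift_iter] at this
      calc y (n + a + d) = α y (n + a + c) := (e1 (n + a)).symm
        _ = α y (n + c + a) := by rw [show n + a + c = n + c + a from by omega]
        _ = y (n + c + b) := e2 (n + c)
    apply hniso
    rcases Nat.lt_or_ge (a + d) (c + b) with h | h
    · exact isolated_of_eventually_periodic X x hx S hSopen hxS (a + d) (c + b - (a + d))
        (by omega) (fun y hy m => by
          have := keyeq y hy m
          rw [show m + (a + d) + (c + b - (a + d)) = m + c + b from by omega,
            show m + (a + d) = m + a + d from by omega]
          exact this.symm)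
    · have hne2 : c + b < a + d := by omega
      exact isolated_of_eventually_periodic X x hx S hSopen hxS (c + b) (a + d - (c + b))
        (by omega) (fun y hy m => by
          have := keyeq y hy m
          rw [show m + (c + b) + (a + d - (c + b)) = m + a + d from by omega,
            show m + (c + b) = m + c + b from by omega]
          exact this)
end

section
/- Let X, Y be one-sided shift spaces, h : X → Y a continuous orbit equivalence with cocycle pair (k, l), b : X → ℤ continuous with b(x) ≥ l(x) for all x, and n : X → ℕ₀ continuous with l(x) − k(x) = n(x) + b(x) − b(σ_X(x)) for all x ∈ X. Define φ(x) = σ_Y^{b(x)}(h(x)). Then φ(σ_X(x)) = σ_Y^{n(x)}(φ(x)) for all x ∈ X. -/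
/-- Given a continuous orbit equivalence `h : X → Y` with cocycle pair `(k, l)`,
a continuous `b : X → ℤ` with `b(x) ≥ l(x)` and a continuous `n : X → ℕ₀` with
`l(x) - k(x) = n(x) + b(x) - b(σ_X(x))`, the map `φ(x) = σ_Y^{b(x)}(h(x))`
satisfies `φ(σ_X(x)) = σ_Y^{n(x)}(φ(x))` for all `x ∈ X`. -/
theorem stmt4 {A B : Type*} [Fintype A] [Fintype B]
    [TopologicalSpace A] [DiscreteTopology A] [TopologicalSpace B] [DiscreteTopology B]
    (X : Set (ℕ → A)) (Y : Set (ℕ → B))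
    (hXcl : IsClosed X) (hXinv : shift '' X = X)
    (hYcl : IsClosed Y) (hYinv : shift '' Y = Y)
    (h : (ℕ → A) → (ℕ → B)) (h' : (ℕ → B) → (ℕ → A))
    (hmap : Set.MapsTo h X Y) (hmap' : Set.MapsTo h' Y X)
    (hleft : ∀ x ∈ X, h' (h x) = x) (hright : ∀ y ∈ Y, h (h' y) = y)
    (hc : ContinuousOn h X) (hc' : ContinuousOn h' Y)
    (k l : (ℕ → A) → ℕ) (hk : ContinuousOn k X) (hl : ContinuousOn l X)
    (hcoc : ∀ x ∈ X, shift^[k x] (h (shift x)) = shift^[l x] (h x))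
    (b : (ℕ → A) → ℤ) (hb : ContinuousOn b X)
    (hbl : ∀ x ∈ X, (l x : ℤ) ≤ b x)
    (n : (ℕ → A) → ℕ) (hn : ContinuousOn n X)
    (hrel : ∀ x ∈ X, (l x : ℤ) - (k x : ℤ) = (n x : ℤ) + b x - b (shift x)) :
    ∀ x ∈ X, shift^[(b (shift x)).toNat] (h (shift x))
      = shift^[n x] (shift^[(b x).toNat] (h x)) := by
  intro x hx
  have hb1 : (l x : ℤ) ≤ b x := hbl x hx
  have hrel' := hrel x hx
  have h1 : (b (shift x)).toNat = (n x + (b x - l x).toNat) + k x := by omega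
  have h2 : n x + (b x - l x).toNat + l x = n x + (b x).toNat := by omega
  rw [h1, Function.iterate_add_apply, hcoc x hx, ← Function.iterate_add_apply, h2,
    Function.iterate_add_apply]
end

section
/- Let 𝐗 and 𝐘 be two-sided shift spaces with shifts τ_X and τ_Y, and let φ : 𝐗 → 𝐘 and m : 𝐗 × ℤ → ℤ satisfy τ_Y^{m_x(j)}(φ(x)) = φ(τ_X^j(x)) for all x ∈ 𝐗 and j ∈ ℤ, together with the cocycle identity m_x(i+j) = m_x(i) + m_{τ_X^i(x)}(j) and m_x(j) → ±∞ monotonically as j → ±∞. If x ∈ 𝐗 is periodic with least period p, then φ(x) is periodic with period m_x(p) ≥ 1. -/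
open Filter

/-- The one-sided tail `x_{[i,∞)}` of a two-sided sequence. -/
def tail {A : Type*} (x : ℤ → A) (i : ℤ) : ℕ → A := fun m => x (i + m)

/-- The `i`-th power (for `i : ℤ`) of the two-sided shift `τ`. -/
def tshiftZ {A : Type*} (i : ℤ) (x : ℤ → A) : ℤ → A := fun m => x (m + i)

/-- The two-sided shift space associated to a one-sided shift space `X`. -/
def TwoSided {A : Type*} (X : Set (ℕ → A)) : Set (ℤ → A) :=
  {x | ∀ m : ℤ, tail x m ∈ X}

/-- If `φ : 𝐗 → 𝐘` satisfies `τ_Y^{m_x(j)}(φ(x)) = φ(τ_X^j(x))` for a monotone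
cocycle `m` tending to `±∞`, and `x` is periodic with least period `p`, then
`φ(x)` is periodic with period `m_x(p) ≥ 1`. -/
theorem stmt9 {A B : Type*} [Fintype A] [Fintype B]
    [TopologicalSpace A] [DiscreteTopology A] [TopologicalSpace B] [DiscreteTopology B]
    (X : Set (ℕ → A)) (hXcl : IsClosed X) (hXinv : shift '' X = X)
    (Y : Set (ℕ → B)) (hYcl : IsClosed Y) (hYinv : shift '' Y = Y)
    (φ : (ℤ → A) → (ℤ → B)) (hφ : Set.MapsTo φ (TwoSided X) (TwoSided Y))
    (m : (ℤ → A) → ℤ → ℤ)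
    (hint : ∀ x ∈ TwoSided X, ∀ j : ℤ, tshiftZ (m x j) (φ x) = φ (tshiftZ j x))
    (hcoc : ∀ x ∈ TwoSided X, ∀ i j : ℤ, m x (i + j) = m x i + m (tshiftZ i x) j)
    (hmono : ∀ x ∈ TwoSided X, Monotone (m x))
    (htop : ∀ x ∈ TwoSided X, Tendsto (m x) atTop atTop)
    (hbot : ∀ x ∈ TwoSided X, Tendsto (m x) atBot atBot)
    (x : ℤ → A) (hx : x ∈ TwoSided X)
    (p : ℕ) (hlp : IsLeast {q : ℕ | 0 < q ∧ tshiftZ (q : ℤ) x = x} p) :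
    1 ≤ m x (p : ℤ) ∧ tshiftZ (m x (p : ℤ)) (φ x) = φ x := by

  obtain ⟨⟨hp0, hper⟩, -⟩ := hlp
  have hz : tshiftZ (0:ℤ) x = x := funext fun k => by simp [tshiftZ]
  have hm0 : m x 0 = 0 := by
    have := hcoc x hx 0 0
    rw [hz] at this
    simp at this
    omega
  -- m x (n*p) = n * m x p via periodicity
  have hnp : ∀ n : ℕ, tshiftZ ((n : ℤ) * p) x = x ∧ m x ((n : ℤ) * p) = n * m x p := by
    intro n
    induction n with
    | zero => exact ⟨by simpa using hz, by simpa using hm0⟩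
    | succ n ih =>
      obtain ⟨ih1, ih2⟩ := ih
      have hshift : tshiftZ (((n : ℤ) + 1) * p) x = x := by
        funext k
        have := congrFun hper (k + (n : ℤ) * p)
        have := congrFun ih1 k
        simp only [tshiftZ] at *
        rw [show k + ((n : ℤ) + 1) * (p : ℤ) = k + (n : ℤ) * p + p by ring]
        simp_all
      constructor
      · push_cast
        exact hshift
      · have := hcoc x hx ((n : ℤ) * p) p
        rw [ih1] at this
        push_cast
        rw [show ((n : ℤ) + 1) * (p : ℤ) = (n : ℤ) * p + p by ring, this, ih2]
        ring
  have h1 : 1 ≤ m x (p : ℤ) := by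
    by_contra h
    push_neg at h
    have hle : m x (p : ℤ) ≤ 0 := by omega
    -- m x is bounded above by 0 on all of ℤ, contradicting tendsto atTop
    have := htop x hx
    rw [tendsto_atTop] at this
    obtain ⟨j, hj⟩ := (this 1).exists_forall_of_atTop
    -- find n with j ≤ n * p
    obtain ⟨n, hn⟩ := exists_nat_ge (j : ℤ)
    have hjle : j ≤ (n : ℤ) * p := by
      have : (1 : ℤ) ≤ p := by exact_mod_cast hp0
      nlinarith
    have hmle : m x j ≤ m x ((n : ℤ) * p) := hmono x hx hjle
    have : m x ((n : ℤ) * p) ≤ 0 := by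
      rw [(hnp n).2]
      have : (0:ℤ) ≤ n := by positivity
      nlinarith
    have := hj j le_rfl
    omega
  refine ⟨h1, ?_⟩
  have := hint x hx p
  rw [hper] at this
  exact this
end

section
/- Let 𝐗 be a two-sided shift space with shift τ and n : X → ℕ₀ a function on the associated one-sided shift such that for every x ∈ 𝐗 and i₀ ∈ ℤ there exist i < i₀ and j > i₀ with n(x_{[i,∞)}) ≠ 0 and n(x_{[j,∞)}) ≠ 0. For x ∈ 𝐗 define i_x(t) = max{i ∈ ℤ : i ≤ t, n(x_{[i,∞)}) ≠ 0} and j_x(t) = min{j ∈ ℤ : j > t, n(x_{[j,∞)}) ≠ 0} for t ∈ ℝ, and r_x(t) = m_x(i_x(t)) + ((t − i_x(t))/(j_x(t) − i_x(t))) · n(x_{[i_x(t),∞)}), where m_x is the cocycle built from n. Then r_x : ℝ → ℝ is a strictly increasing piecewise-linear homeomorphism with r_x(i) = m_x(i) whenever n(x_{[i,∞)}) ≠ 0. -/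
/-- The partial-sum cocycle `m_x(j)` built from `n : X → ℕ₀` along `x`. -/
def mcoc {A : Type*} (n : (ℕ → A) → ℕ) (x : ℤ → A) (j : ℤ) : ℤ :=
  if 0 ≤ j then ∑ i ∈ Finset.range j.toNat, (n (tail x (i : ℤ)) : ℤ)
  else -∑ i ∈ Finset.range (-j).toNat, (n (tail x (-(i : ℤ) - 1)) : ℤ)

/-- `i_x(t)`: the largest `i ≤ t` with `n(x_{[i,∞)}) ≠ 0`. -/
noncomputable def ixt {A : Type*} (n : (ℕ → A) → ℕ) (x : ℤ → A) (t : ℝ) : ℤ :=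
  sSup {i : ℤ | (i : ℝ) ≤ t ∧ n (tail x i) ≠ 0}

/-- `j_x(t)`: the smallest `j > t` with `n(x_{[j,∞)}) ≠ 0`. -/
noncomputable def jxt {A : Type*} (n : (ℕ → A) → ℕ) (x : ℤ → A) (t : ℝ) : ℤ :=
  sInf {j : ℤ | t < (j : ℝ) ∧ n (tail x j) ≠ 0}

/-- The piecewise-linear interpolation `r_x : ℝ → ℝ` of the cocycle `m_x`. -/
noncomputable def rfun {A : Type*} (n : (ℕ → A) → ℕ) (x : ℤ → A) (t : ℝ) : ℝ :=
  (mcoc n x (ixt n x t) : ℝ) +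
    ((t - (ixt n x t : ℝ)) / ((jxt n x t : ℝ) - (ixt n x t : ℝ))) *
      (n (tail x (ixt n x t)) : ℝ)

/-! Between two consecutive indices `i < j` with `n(x_{[i,∞)}), n(x_{[j,∞)}) ≠ 0`, `r_x` is the
affine map from `m_x(i)` to `m_x(j) = m_x(i) + n(x_{[i,∞)})`, so `r_x` is strictly increasing.
Each such step raises `m_x` by at least one, so along the nonvanishing indices `m_x` is unbounded
in both directions and every real number lies in one of these affine pieces: `r_x` is onto, and a
monotone surjection of `ℝ` onto `ℝ` is continuous. -/

section Cocycle

variable {A : Type*} (n : (ℕ → A) → ℕ) (x : ℤ → A)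

lemma mcoc_add_one (j : ℤ) : mcoc n x (j + 1) = mcoc n x j + n (tail x j) := by
  unfold mcoc
  rcases le_or_gt 0 j with hj | hj
  · rw [if_pos hj, if_pos (by omega), show (j + 1).toNat = j.toNat + 1 by omega,
      Finset.sum_range_succ, Int.toNat_of_nonneg hj]
  · rw [if_neg (by omega : ¬ (0 : ℤ) ≤ j)]
    rcases (show j + 1 ≤ 0 by omega).eq_or_lt with h0 | h0
    · obtain rfl : j = -1 := by omega
      simp
    · rw [if_neg (by omega), show (-j).toNat = (-(j + 1)).toNat + 1 by omega,
        Finset.sum_range_succ, show -(((-(j + 1)).toNat : ℕ) : ℤ) - 1 = j by omega]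
      ring

lemma mcoc_monotone : Monotone (mcoc n x) :=
  monotone_int_of_le_succ fun j => by rw [mcoc_add_one]; omega

variable {n x}

lemma mcoc_eq_of_forall_eq_zero {a b : ℤ} (hab : a ≤ b)
    (h : ∀ k, a ≤ k → k < b → n (tail x k) = 0) : mcoc n x b = mcoc n x a := by
  induction b, hab using Int.leInduction with
  | base => rfl
  | succ b hb ih =>
    rw [mcoc_add_one, h b hb (by omega), ih fun k hk hkb => h k hk (by omega)]
    simp

end Cocycle

section Interpolation

variable {A : Type*} {n : (ℕ → A) → ℕ} {x : ℤ → A}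

lemma ixt_mem (hlo : ∀ i₀ : ℤ, ∃ i < i₀, n (tail x i) ≠ 0) (t : ℝ) :
    ixt n x t ∈ {i : ℤ | (i : ℝ) ≤ t ∧ n (tail x i) ≠ 0} := by
  refine Int.csSup_mem ?_ ⟨⌊t⌋, fun k hk => Int.le_floor.mpr hk.1⟩
  obtain ⟨i, hi, hni⟩ := hlo (⌊t⌋ + 1)
  exact ⟨i, (Int.cast_le.mpr (by omega : i ≤ ⌊t⌋)).trans (Int.floor_le t), hni⟩

lemma le_ixt {t : ℝ} {k : ℤ} (hk : (k : ℝ) ≤ t) (hnk : n (tail x k) ≠ 0) : k ≤ ixt n x t :=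
  le_csSup ⟨⌊t⌋, fun _ hi => Int.le_floor.mpr hi.1⟩ ⟨hk, hnk⟩

lemma jxt_mem (hhi : ∀ i₀ : ℤ, ∃ j, i₀ < j ∧ n (tail x j) ≠ 0) (t : ℝ) :
    jxt n x t ∈ {j : ℤ | t < (j : ℝ) ∧ n (tail x j) ≠ 0} := by
  refine Int.csInf_mem ?_ ⟨⌈t⌉, fun k hk => Int.ceil_le.mpr hk.1.le⟩
  obtain ⟨j, hj, hnj⟩ := hhi ⌈t⌉
  exact ⟨j, (Int.le_ceil t).trans_lt (Int.cast_lt.mpr hj), hnj⟩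

lemma jxt_le {t : ℝ} {k : ℤ} (hk : t < (k : ℝ)) (hnk : n (tail x k) ≠ 0) : jxt n x t ≤ k :=
  csInf_le ⟨⌈t⌉, fun _ hj => Int.ceil_le.mpr hj.1.le⟩ ⟨hk, hnk⟩

lemma ixt_lt_jxt (hlo : ∀ i₀ : ℤ, ∃ i < i₀, n (tail x i) ≠ 0)
    (hhi : ∀ i₀ : ℤ, ∃ j, i₀ < j ∧ n (tail x j) ≠ 0) (t : ℝ) : ixt n x t < jxt n x t :=
  Int.cast_lt.mp ((ixt_mem hlo t).1.trans_lt (jxt_mem hhi t).1)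

lemma ixt_monotone (hlo : ∀ i₀ : ℤ, ∃ i < i₀, n (tail x i) ≠ 0) : Monotone (ixt n x) :=
  fun _ _ hst => le_ixt ((ixt_mem hlo _).1.trans hst) (ixt_mem hlo _).2

lemma ixt_intCast (hlo : ∀ i₀ : ℤ, ∃ i < i₀, n (tail x i) ≠ 0) {i : ℤ}
    (hi : n (tail x i) ≠ 0) : ixt n x i = i :=
  le_antisymm (Int.cast_le.mp (ixt_mem hlo i).1) (le_ixt le_rfl hi)

lemma jxt_intCast_sub_one (hhi : ∀ i₀ : ℤ, ∃ j, i₀ < j ∧ n (tail x j) ≠ 0) {i : ℤ}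
    (hi : n (tail x i) ≠ 0) : jxt n x (i - 1) = i := by
  refine le_antisymm (jxt_le (by linarith) hi) ?_
  have h : ((i - 1 : ℤ) : ℝ) < jxt n x (i - 1) := by push_cast; exact (jxt_mem hhi _).1
  have := Int.cast_lt.mp h
  omega

lemma jxt_ixt (hlo : ∀ i₀ : ℤ, ∃ i < i₀, n (tail x i) ≠ 0)
    (hhi : ∀ i₀ : ℤ, ∃ j, i₀ < j ∧ n (tail x j) ≠ 0) (t : ℝ) :
    jxt n x (ixt n x t) = jxt n x t := by
  obtain ⟨hit, -⟩ := ixt_mem hlo t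
  obtain ⟨hij, hnj⟩ := jxt_mem hhi (ixt n x t)
  refine le_antisymm (jxt_le (hit.trans_lt (jxt_mem hhi t).1) (jxt_mem hhi t).2)
    (jxt_le ?_ hnj)
  by_contra! h
  exact absurd (le_ixt h hnj) (not_le.mpr (Int.cast_lt.mp hij))

lemma ixt_eq_of_mem_Ico (hlo : ∀ i₀ : ℤ, ∃ i < i₀, n (tail x i) ≠ 0) {i : ℤ}
    (hi : n (tail x i) ≠ 0) {t : ℝ} (hit : (i : ℝ) ≤ t) (htj : t < jxt n x i) :
    ixt n x t = i := by
  refine le_antisymm ?_ (le_ixt hit hi)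
  by_contra! h
  have : (jxt n x i : ℝ) ≤ ixt n x t :=
    Int.cast_le.mpr (jxt_le (Int.cast_lt.mpr h) (ixt_mem hlo t).2)
  linarith [(ixt_mem hlo t).1]

lemma mcoc_jxt (hlo : ∀ i₀ : ℤ, ∃ i < i₀, n (tail x i) ≠ 0)
    (hhi : ∀ i₀ : ℤ, ∃ j, i₀ < j ∧ n (tail x j) ≠ 0) (t : ℝ) :
    mcoc n x (jxt n x t) = mcoc n x (ixt n x t) + n (tail x (ixt n x t)) := by
  rw [mcoc_eq_of_forall_eq_zero (a := ixt n x t + 1) (ixt_lt_jxt hlo hhi t), mcoc_add_one]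
  intro k hik hkj
  by_contra hnk
  rcases le_or_gt (k : ℝ) t with h | h
  · exact absurd (le_ixt h hnk) (by omega)
  · exact absurd (jxt_le h hnk) (by omega)

lemma one_le_n_tail_ixt (hlo : ∀ i₀ : ℤ, ∃ i < i₀, n (tail x i) ≠ 0) (t : ℝ) :
    (1 : ℝ) ≤ n (tail x (ixt n x t)) :=
  Nat.one_le_cast.mpr (Nat.one_le_iff_ne_zero.mpr (ixt_mem hlo t).2)

lemma mcoc_ixt_le_rfun (hlo : ∀ i₀ : ℤ, ∃ i < i₀, n (tail x i) ≠ 0)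
    (hhi : ∀ i₀ : ℤ, ∃ j, i₀ < j ∧ n (tail x j) ≠ 0) (t : ℝ) :
    (mcoc n x (ixt n x t) : ℝ) ≤ rfun n x t := by
  have hd : (0 : ℝ) < jxt n x t - ixt n x t :=
    sub_pos.mpr (Int.cast_lt.mpr (ixt_lt_jxt hlo hhi t))
  have : 0 ≤ (t - ixt n x t) / (jxt n x t - ixt n x t) * (n (tail x (ixt n x t)) : ℝ) :=
    mul_nonneg (div_nonneg (by linarith [(ixt_mem hlo t).1]) hd.le) (Nat.cast_nonneg _)
  unfold rfun
  linarith

lemma rfun_lt_mcoc_jxt (hlo : ∀ i₀ : ℤ, ∃ i < i₀, n (tail x i) ≠ 0)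
    (hhi : ∀ i₀ : ℤ, ∃ j, i₀ < j ∧ n (tail x j) ≠ 0) (t : ℝ) :
    rfun n x t < mcoc n x (jxt n x t) := by
  have hd : (0 : ℝ) < jxt n x t - ixt n x t :=
    sub_pos.mpr (Int.cast_lt.mpr (ixt_lt_jxt hlo hhi t))
  have hq : (t - ixt n x t) / (jxt n x t - ixt n x t) < 1 :=
    (div_lt_one hd).mpr (by linarith [(jxt_mem hhi t).1])
  have := mul_lt_mul_of_pos_right hq (zero_lt_one.trans_le (one_le_n_tail_ixt hlo t))
  rw [mcoc_jxt hlo hhi]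
  unfold rfun
  push_cast
  linarith

lemma rfun_eq_of_mem_Ico (hlo : ∀ i₀ : ℤ, ∃ i < i₀, n (tail x i) ≠ 0)
    (hhi : ∀ i₀ : ℤ, ∃ j, i₀ < j ∧ n (tail x j) ≠ 0) {i : ℤ} (hi : n (tail x i) ≠ 0) {t : ℝ}
    (hit : (i : ℝ) ≤ t) (htj : t < jxt n x i) :
    rfun n x t = mcoc n x i + (t - i) / (jxt n x i - i) * n (tail x i) := by
  have h := ixt_eq_of_mem_Ico hlo hi hit htj
  unfold rfun
  rw [← jxt_ixt hlo hhi t, h]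

lemma rfun_intCast (hlo : ∀ i₀ : ℤ, ∃ i < i₀, n (tail x i) ≠ 0) {i : ℤ}
    (hi : n (tail x i) ≠ 0) : rfun n x i = mcoc n x i := by
  simp [rfun, ixt_intCast hlo hi]

lemma rfun_strictMono (hlo : ∀ i₀ : ℤ, ∃ i < i₀, n (tail x i) ≠ 0)
    (hhi : ∀ i₀ : ℤ, ∃ j, i₀ < j ∧ n (tail x j) ≠ 0) : StrictMono (rfun n x) := by
  intro s t hst
  rcases (ixt_monotone hlo hst.le).eq_or_lt with heq | hlt
  · have hd : (0 : ℝ) < jxt n x s - ixt n x s :=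
      sub_pos.mpr (Int.cast_lt.mpr (ixt_lt_jxt hlo hhi s))
    have hj : jxt n x s = jxt n x t := by rw [← jxt_ixt hlo hhi s, heq, jxt_ixt hlo hhi]
    unfold rfun
    rw [← heq, ← hj]
    gcongr
    linarith [one_le_n_tail_ixt hlo s]
  · -- the piece of `s` ends no later than the piece of `t` starts: `jxt s ≤ ixt t`
    have hs : s < ixt n x t := by
      by_contra! h
      exact absurd (le_ixt h (ixt_mem hlo t).2) (not_le.mpr hlt)
    have := Int.cast_le (R := ℝ) |>.mpr (mcoc_monotone n x (jxt_le hs (ixt_mem hlo t).2))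
    linarith [rfun_lt_mcoc_jxt hlo hhi s, mcoc_ixt_le_rfun hlo hhi t]

lemma exists_add_le_mcoc (hlo : ∀ i₀ : ℤ, ∃ i < i₀, n (tail x i) ≠ 0)
    (hhi : ∀ i₀ : ℤ, ∃ j, i₀ < j ∧ n (tail x j) ≠ 0) {i : ℤ} (hi : n (tail x i) ≠ 0) (N : ℕ) :
    ∃ j, n (tail x j) ≠ 0 ∧ mcoc n x i + N ≤ mcoc n x j := by
  induction N with
  | zero => exact ⟨i, hi, by simp⟩
  | succ N ih =>
    obtain ⟨j, hj, hij⟩ := ih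
    refine ⟨jxt n x j, (jxt_mem hhi _).2, ?_⟩
    have := mcoc_jxt hlo hhi j
    rw [ixt_intCast hlo hj] at this
    have := Nat.one_le_iff_ne_zero.mpr hj
    omega

lemma exists_mcoc_le_sub (hlo : ∀ i₀ : ℤ, ∃ i < i₀, n (tail x i) ≠ 0)
    (hhi : ∀ i₀ : ℤ, ∃ j, i₀ < j ∧ n (tail x j) ≠ 0) {i : ℤ} (hi : n (tail x i) ≠ 0) (N : ℕ) :
    ∃ j, n (tail x j) ≠ 0 ∧ mcoc n x j ≤ mcoc n x i - N := by
  induction N with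
  | zero => exact ⟨i, hi, by simp⟩
  | succ N ih =>
    obtain ⟨j, hj, hji⟩ := ih
    refine ⟨ixt n x (j - 1), (ixt_mem hlo _).2, ?_⟩
    have := mcoc_jxt hlo hhi (j - 1)
    rw [jxt_intCast_sub_one hhi hj] at this
    have := Nat.one_le_iff_ne_zero.mpr (ixt_mem hlo (j - 1)).2
    omega

lemma exists_lt_mcoc (hlo : ∀ i₀ : ℤ, ∃ i < i₀, n (tail x i) ≠ 0)
    (hhi : ∀ i₀ : ℤ, ∃ j, i₀ < j ∧ n (tail x j) ≠ 0) (y : ℝ) :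
    ∃ j, n (tail x j) ≠ 0 ∧ y < mcoc n x j := by
  obtain ⟨i, -, hi⟩ := hlo 0
  obtain ⟨N, hN⟩ := exists_nat_gt (y - mcoc n x i)
  obtain ⟨j, hj, hij⟩ := exists_add_le_mcoc hlo hhi hi N
  have h : ((mcoc n x i + N : ℤ) : ℝ) ≤ mcoc n x j := Int.cast_le.mpr hij
  push_cast at h
  exact ⟨j, hj, by linarith⟩

lemma exists_mcoc_le (hlo : ∀ i₀ : ℤ, ∃ i < i₀, n (tail x i) ≠ 0)
    (hhi : ∀ i₀ : ℤ, ∃ j, i₀ < j ∧ n (tail x j) ≠ 0) (y : ℝ) :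
    ∃ j, n (tail x j) ≠ 0 ∧ (mcoc n x j : ℝ) ≤ y := by
  obtain ⟨i, -, hi⟩ := hlo 0
  obtain ⟨N, hN⟩ := exists_nat_ge (mcoc n x i - y)
  obtain ⟨j, hj, hji⟩ := exists_mcoc_le_sub hlo hhi hi N
  have h : (mcoc n x j : ℝ) ≤ ((mcoc n x i - N : ℤ) : ℝ) := Int.cast_le.mpr hji
  push_cast at h
  exact ⟨j, hj, by linarith⟩

lemma exists_mcoc_le_lt_mcoc_jxt (hlo : ∀ i₀ : ℤ, ∃ i < i₀, n (tail x i) ≠ 0)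
    (hhi : ∀ i₀ : ℤ, ∃ j, i₀ < j ∧ n (tail x j) ≠ 0) (y : ℝ) :
    ∃ i, n (tail x i) ≠ 0 ∧ (mcoc n x i : ℝ) ≤ y ∧ y < mcoc n x (jxt n x i) := by
  set S := {k : ℤ | n (tail x k) ≠ 0 ∧ (mcoc n x k : ℝ) ≤ y}
  obtain ⟨jhi, -, hjhi⟩ := exists_lt_mcoc hlo hhi y
  have hbdd : BddAbove S := by
    refine ⟨jhi, fun k hk => ?_⟩
    by_contra! h
    linarith [hk.2, (Int.cast_le (R := ℝ)).mpr (mcoc_monotone n x h.le)]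
  obtain ⟨hi, hiy⟩ : sSup S ∈ S := Int.csSup_mem (exists_mcoc_le hlo hhi y) hbdd
  refine ⟨sSup S, hi, hiy, ?_⟩
  by_contra! h
  have := le_csSup hbdd ⟨(jxt_mem hhi (sSup S : ℤ)).2, h⟩
  have := Int.cast_lt.mp (jxt_mem hhi (sSup S : ℤ)).1
  omega

lemma rfun_surjective (hlo : ∀ i₀ : ℤ, ∃ i < i₀, n (tail x i) ≠ 0)
    (hhi : ∀ i₀ : ℤ, ∃ j, i₀ < j ∧ n (tail x j) ≠ 0) : Function.Surjective (rfun n x) := by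
  intro y
  obtain ⟨i, hi, hiy, hyj⟩ := exists_mcoc_le_lt_mcoc_jxt hlo hhi y
  have hn : (0 : ℝ) < n (tail x i) := Nat.cast_pos.mpr (Nat.pos_of_ne_zero hi)
  have hd : (0 : ℝ) < jxt n x i - i := by
    have := (jxt_mem hhi (i : ℝ)).1
    linarith
  have hyn : y - mcoc n x i < n (tail x i) := by
    have := mcoc_jxt hlo hhi i
    rw [ixt_intCast hlo hi] at this
    have : (mcoc n x (jxt n x i) : ℝ) = mcoc n x i + n (tail x i) := by exact_mod_cast this
    linarith
  set t : ℝ := i + (y - mcoc n x i) * (jxt n x i - i) / n (tail x i) with ht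
  have hit : (i : ℝ) ≤ t := le_add_of_nonneg_right (by positivity)
  have htj : t < jxt n x i := by
    have : (y - mcoc n x i) * (jxt n x i - i) / n (tail x i) < jxt n x i - i := by
      rw [div_lt_iff₀ hn]
      nlinarith
    linarith
  refine ⟨t, ?_⟩
  rw [rfun_eq_of_mem_Ico hlo hhi hi hit htj, ht]
  field_simp
  ring

end Interpolation

theorem stmt10_general {A : Type*}
    (X : Set (ℕ → A))
    (n : (ℕ → A) → ℕ)
    (hcof : ∀ x ∈ TwoSided X, ∀ i₀ : ℤ,
      (∃ i : ℤ, i < i₀ ∧ n (tail x i) ≠ 0) ∧ (∃ j : ℤ, i₀ < j ∧ n (tail x j) ≠ 0)) :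
    ∀ x ∈ TwoSided X,
      StrictMono (rfun n x) ∧ Continuous (rfun n x) ∧
      Function.Bijective (rfun n x) ∧
      ∀ i : ℤ, n (tail x i) ≠ 0 → rfun n x (i : ℝ) = (mcoc n x i : ℝ) := by
  intro x hx
  have hlo := fun i₀ => (hcof x hx i₀).1
  have hhi := fun i₀ => (hcof x hx i₀).2
  have hmono := rfun_strictMono hlo hhi
  have hsurj := rfun_surjective hlo hhi
  exact ⟨hmono, hmono.monotone.continuous_of_surjective hsurj, ⟨hmono.injective, hsurj⟩,
    fun i hi => rfun_intCast hlo hi⟩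

/-- Under the cofinal-nonvanishing hypothesis on `n` along every `x ∈ 𝐗`, the
map `r_x` is a strictly increasing continuous bijection of `ℝ` (hence a
homeomorphism) with `r_x(i) = m_x(i)` whenever `n(x_{[i,∞)}) ≠ 0`. -/
theorem stmt10 {A : Type*} [Fintype A] [TopologicalSpace A] [DiscreteTopology A]
    (X : Set (ℕ → A)) (hcl : IsClosed X) (hinv : shift '' X = X)
    (n : (ℕ → A) → ℕ)
    (hcof : ∀ x ∈ TwoSided X, ∀ i₀ : ℤ,
      (∃ i : ℤ, i < i₀ ∧ n (tail x i) ≠ 0) ∧ (∃ j : ℤ, i₀ < j ∧ n (tail x j) ≠ 0)) :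
    ∀ x ∈ TwoSided X,
      StrictMono (rfun n x) ∧ Continuous (rfun n x) ∧
      Function.Bijective (rfun n x) ∧
      ∀ i : ℤ, n (tail x i) ≠ 0 → rfun n x (i : ℝ) = (mcoc n x i : ℝ) :=
  stmt10_general X n hcof
end

section
/- Let X be a one-sided shift of finite type and 𝒢_X its groupoid. The map Φ sending a continuous groupoid homomorphism f ∈ Hom(𝒢_X, ℤ) to the function g ∈ C(X, ℤ) given by g(x) = f((x, 1, σ(x))) induces a group isomorphism Φ : H¹(𝒢_X) → H^X, with inverse induced by g ↦ ((x, r − s, y) ↦ Σ_{i=0}^{r−1} g(σ^i(x)) − Σ_{j=0}^{s−1} g(σ^j(y))) for (x, r − s, y) ∈ 𝒢_X with σ^r(x) = σ^s(y). -/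
/-- The Deaconu–Renault groupoid `𝒢_X` of a one-sided shift of finite type,
as a subset of `X × ℤ × X`. An element is written `(x, n, x')` with
`n = i - j` and `σ^i(x) = σ^j(x')`. -/
def GX {A : Type*} (X : Set (ℕ → A)) : Set ((ℕ → A) × ℤ × (ℕ → A)) :=
  {g | g.1 ∈ X ∧ g.2.2 ∈ X ∧
    ∃ i j : ℕ, g.2.1 = (i : ℤ) - (j : ℤ) ∧ shift^[i] g.1 = shift^[j] g.2.2}

/-- The basic (open) sets generating the étale topology of `𝒢_X`. -/
def IsBasicG {A : Type*} [TopologicalSpace A] (S : Set ((ℕ → A) × ℤ × (ℕ → A))) : Prop :=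
  ∃ (i j : ℕ) (U U' : Set (ℕ → A)), IsOpen U ∧ IsOpen U' ∧
    S = {g | g.1 ∈ U ∧ g.2.2 ∈ U' ∧ g.2.1 = (i : ℤ) - (j : ℤ) ∧
      shift^[i] g.1 = shift^[j] g.2.2}

/-- `F` represents a continuous groupoid homomorphism `𝒢_X → ℤ`: it is locally
constant on `𝒢_X` (with respect to the basic sets), inverts under inversion and
is additive on composable pairs. -/
def GrpdHom {A : Type*} [TopologicalSpace A]
    (X : Set (ℕ → A)) (F : (ℕ → A) × ℤ × (ℕ → A) → ℤ) : Prop :=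
  (∀ γ ∈ GX X, ∃ S, IsBasicG S ∧ γ ∈ S ∧ ∀ γ' ∈ S ∩ GX X, F γ' = F γ) ∧
  (∀ x n x', (x, n, x') ∈ GX X → F (x', -n, x) = -F (x, n, x')) ∧
  (∀ x n x' n' x'', (x, n, x') ∈ GX X → (x', n', x'') ∈ GX X →
    F (x, n + n', x'') = F (x, n, x') + F (x', n', x''))

namespace S14

variable {A : Type*}

lemma mem_GX {X : Set (ℕ → A)} {x y : ℕ → A} {n : ℤ} :
    (x, n, y) ∈ GX X ↔ x ∈ X ∧ y ∈ X ∧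
      ∃ i j : ℕ, n = (i : ℤ) - (j : ℤ) ∧ shift^[i] x = shift^[j] y := Iff.rfl

lemma sum_split (g : (ℕ → A) → ℤ) (y : ℕ → A) (a b : ℕ) :
    ∑ k ∈ Finset.range (a + b), g (shift^[k] y)
      = ∑ k ∈ Finset.range a, g (shift^[k] y) + ∑ k ∈ Finset.range b, g (shift^[a + k] y) :=
  Finset.sum_range_add _ a b

lemma iter_congr {x y : ℕ → A} {r s : ℕ} (h : shift^[r] x = shift^[s] y) (k : ℕ) :
    shift^[r + k] x = shift^[s + k] y := by
  rw [add_comm r k, add_comm s k, Function.iterate_add_apply, Function.iterate_add_apply, h]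

lemma memX_iter {X : Set (ℕ → A)} (hinv : shift '' X = X) {x} (hx : x ∈ X) (i : ℕ) :
    shift^[i] x ∈ X := by
  induction i with
  | zero => exact hx
  | succ n ih =>
    rw [Function.iterate_succ_apply', ← hinv]
    exact ⟨_, ih, rfl⟩

lemma continuous_shift [TopologicalSpace A] : Continuous (shift (A := A)) :=
  continuous_pi fun n => continuous_apply (n + 1)

lemma locConst [TopologicalSpace A] {X : Set (ℕ → A)} {g : (ℕ → A) → ℤ}
    (hg : ContinuousOn g X) {z} (hz : z ∈ X) :
    ∃ U : Set (ℕ → A), IsOpen U ∧ z ∈ U ∧ ∀ w ∈ U ∩ X, g w = g z := by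
  have h : {w | g w = g z} ∈ nhdsWithin z X :=
    hg z hz ((isOpen_discrete {g z}).mem_nhds rfl)
  obtain ⟨U, hUo, hzU, hsub⟩ := mem_nhdsWithin.mp h
  exact ⟨U, hUo, hzU, fun w hw => hsub ⟨hw.1, hw.2⟩⟩

lemma sums_le (g : (ℕ → A) → ℤ) (x y : ℕ → A) {r s d : ℕ}
    (h1 : shift^[r] x = shift^[s] y) :
    ∑ i ∈ Finset.range (r + d), g (shift^[i] x) - ∑ j ∈ Finset.range (s + d), g (shift^[j] y)
      = ∑ i ∈ Finset.range r, g (shift^[i] x) - ∑ j ∈ Finset.range s, g (shift^[j] y) := by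
  rw [Finset.sum_range_add, Finset.sum_range_add,
    show (∑ k ∈ Finset.range d, g (shift^[r + k] x))
      = ∑ k ∈ Finset.range d, g (shift^[s + k] y) from
    Finset.sum_congr rfl fun k _ => by rw [iter_congr h1 k]]
  ring

lemma sums_eq (g : (ℕ → A) → ℤ) (x y : ℕ → A) {r s r' s' : ℕ}
    (hn : (r : ℤ) - s = (r' : ℤ) - s')
    (h1 : shift^[r] x = shift^[s] y) (h1' : shift^[r'] x = shift^[s'] y) :
    ∑ i ∈ Finset.range r, g (shift^[i] x) - ∑ j ∈ Finset.range s, g (shift^[j] y)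
      = ∑ i ∈ Finset.range r', g (shift^[i] x) - ∑ j ∈ Finset.range s', g (shift^[j] y) := by
  rcases le_total r r' with h | h
  · obtain ⟨d, rfl⟩ := Nat.exists_eq_add_of_le h
    have hs : s' = s + d := by omega
    subst hs
    rw [sums_le g x y h1]
  · obtain ⟨d, rfl⟩ := Nat.exists_eq_add_of_le h
    have hs : s = s' + d := by omega
    subst hs
    rw [sums_le g x y h1']

open Classical in
noncomputable def Fg (g : (ℕ → A) → ℤ) (γ : (ℕ → A) × ℤ × (ℕ → A)) : ℤ :=
  if h : ∃ r s : ℕ, γ.2.1 = (r : ℤ) - (s : ℤ) ∧ shift^[r] γ.1 = shift^[s] γ.2.2 then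
    ∑ i ∈ Finset.range h.choose, g (shift^[i] γ.1) -
      ∑ j ∈ Finset.range h.choose_spec.choose, g (shift^[j] γ.2.2)
  else 0

lemma Fg_eval (g : (ℕ → A) → ℤ) {x y : ℕ → A} {n : ℤ} {r s : ℕ}
    (hn : n = (r : ℤ) - s) (h1 : shift^[r] x = shift^[s] y) :
    Fg g (x, n, y) = ∑ i ∈ Finset.range r, g (shift^[i] x) -
      ∑ j ∈ Finset.range s, g (shift^[j] y) := by
  have hex : ∃ r s : ℕ, ((x, n, y) : (ℕ → A) × ℤ × (ℕ → A)).2.1 = (r : ℤ) - (s : ℤ) ∧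
      shift^[r] ((x, n, y) : (ℕ → A) × ℤ × (ℕ → A)).1
        = shift^[s] ((x, n, y) : (ℕ → A) × ℤ × (ℕ → A)).2.2 := ⟨r, s, hn, h1⟩
  unfold Fg
  rw [dif_pos hex]
  exact sums_eq g x y
    (by rw [← hex.choose_spec.choose_spec.1, hn])
    hex.choose_spec.choose_spec.2 h1

lemma Fg_hom [TopologicalSpace A] {X : Set (ℕ → A)} (hinv : shift '' X = X)
    {g : (ℕ → A) → ℤ} (hg : ContinuousOn g X) : GrpdHom X (Fg g) := by
  refine ⟨?_, ?_, ?_⟩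
  · rintro ⟨x, n, y⟩ hγ
    obtain ⟨hx, hy, r, s, hn, hrs⟩ := mem_GX.mp hγ
    have h1 : ∀ i : ℕ, ∃ U : Set (ℕ → A), IsOpen U ∧ shift^[i] x ∈ U ∧
        ∀ w ∈ U ∩ X, g w = g (shift^[i] x) := fun i => locConst hg (memX_iter hinv hx i)
    have h2 : ∀ j : ℕ, ∃ U : Set (ℕ → A), IsOpen U ∧ shift^[j] y ∈ U ∧
        ∀ w ∈ U ∩ X, g w = g (shift^[j] y) := fun j => locConst hg (memX_iter hinv hy j)
    choose Ux hUxo hUxm hUxc using h1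
    choose Uy hUyo hUym hUyc using h2
    refine ⟨_, ⟨r, s, ⋂ i ∈ Finset.range r, (shift^[i]) ⁻¹' Ux i,
      ⋂ j ∈ Finset.range s, (shift^[j]) ⁻¹' Uy j,
      isOpen_biInter_finset fun i _ => (hUxo i).preimage (continuous_shift.iterate i),
      isOpen_biInter_finset fun j _ => (hUyo j).preimage (continuous_shift.iterate j), rfl⟩,
      ⟨Set.mem_iInter₂.mpr fun i _ => hUxm i, Set.mem_iInter₂.mpr fun j _ => hUym j, hn, hrs⟩,
      ?_⟩
    rintro ⟨x', n', y'⟩ ⟨hS, hγ'⟩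
    obtain ⟨hx'X, hy'X, -⟩ := mem_GX.mp hγ'
    obtain ⟨hxU, hyU, hn', hrs'⟩ := hS
    rw [Fg_eval g hn' hrs', Fg_eval g hn hrs]
    congr 1
    · refine Finset.sum_congr rfl fun i hi => ?_
      rw [hUxc i _ ⟨Set.mem_iInter₂.mp hxU i hi, memX_iter hinv hx'X i⟩]
    · refine Finset.sum_congr rfl fun j hj => ?_
      rw [hUyc j _ ⟨Set.mem_iInter₂.mp hyU j hj, memX_iter hinv hy'X j⟩]
  · rintro x n y hγ
    obtain ⟨hx, hy, r, s, hn, hrs⟩ := mem_GX.mp hγ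
    rw [Fg_eval g (show -n = (s : ℤ) - r by omega) hrs.symm, Fg_eval g hn hrs]
    ring
  · rintro x n y n' z hγ1 hγ2
    obtain ⟨hx, hy, r, s, hn, hrs⟩ := mem_GX.mp hγ1
    obtain ⟨-, hz, p, q, hn', hpq⟩ := mem_GX.mp hγ2
    have hw : shift^[r + p] x = shift^[q + s] z := by
      rw [iter_congr hrs p, add_comm s p, iter_congr hpq s, add_comm q s]
    rw [Fg_eval g hn hrs, Fg_eval g hn' hpq,
      Fg_eval g (show n + n' = ((r + p : ℕ) : ℤ) - ((q + s : ℕ) : ℤ) by push_cast; omega) hw]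
    rw [sum_split g x r p, sum_split g z q s]
    have e1 : (∑ k ∈ Finset.range p, g (shift^[r + k] x))
        = ∑ k ∈ Finset.range p, g (shift^[s + k] y) :=
      Finset.sum_congr rfl fun k _ => by rw [iter_congr hrs k]
    have e2 : (∑ k ∈ Finset.range s, g (shift^[q + k] z))
        = ∑ k ∈ Finset.range s, g (shift^[p + k] y) :=
      Finset.sum_congr rfl fun k _ => by rw [iter_congr hpq.symm k]
    have a1 := sum_split g y s p
    have a2 := sum_split g y p s
    rw [add_comm s p] at a1
    rw [e1, e2]
    linarith

lemma hom_pos [TopologicalSpace A] {X : Set (ℕ → A)} (hinv : shift '' X = X)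
    {F : (ℕ → A) × ℤ × (ℕ → A) → ℤ} (hF : GrpdHom X F) {x : ℕ → A} (hx : x ∈ X) (i : ℕ) :
    F (x, (i : ℤ), shift^[i] x)
      = ∑ k ∈ Finset.range i, F (shift^[k] x, 1, shift^[k + 1] x) := by
  induction i with
  | zero =>
    have m : ((x, (0 : ℤ), x) : (ℕ → A) × ℤ × (ℕ → A)) ∈ GX X :=
      ⟨hx, hx, 0, 0, by norm_num, rfl⟩
    have h := hF.2.2 x 0 x 0 x m m
    norm_num at h ⊢
    linarith
  | succ n ih =>
    have m1 : ((x, (n : ℤ), shift^[n] x) : (ℕ → A) × ℤ × (ℕ → A)) ∈ GX X :=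
      ⟨hx, memX_iter hinv hx n, n, 0, by norm_num, rfl⟩
    have m2 : ((shift^[n] x, (1 : ℤ), shift^[n + 1] x) : (ℕ → A) × ℤ × (ℕ → A)) ∈ GX X :=
      ⟨memX_iter hinv hx n, memX_iter hinv hx (n + 1), 1, 0, by norm_num,
        by show shift^[1] (shift^[n] x) = shift^[0] (shift^[n + 1] x)
           simp [Function.iterate_succ_apply']⟩
    have h := hF.2.2 x n (shift^[n] x) 1 (shift^[n + 1] x) m1 m2
    push_cast
    rw [h, ih, Finset.sum_range_succ]

lemma hom_eval [TopologicalSpace A] {X : Set (ℕ → A)} (hinv : shift '' X = X)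
    {F : (ℕ → A) × ℤ × (ℕ → A) → ℤ} (hF : GrpdHom X F) {x y : ℕ → A}
    (hx : x ∈ X) (hy : y ∈ X) (i j : ℕ) (hij : shift^[i] x = shift^[j] y) :
    F (x, (i : ℤ) - j, y)
      = ∑ k ∈ Finset.range i, F (shift^[k] x, 1, shift^[k + 1] x)
        - ∑ k ∈ Finset.range j, F (shift^[k] y, 1, shift^[k + 1] y) := by
  have m1 : ((x, (i : ℤ), shift^[i] x) : (ℕ → A) × ℤ × (ℕ → A)) ∈ GX X :=
    ⟨hx, memX_iter hinv hx i, i, 0, by norm_num, rfl⟩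
  have m2 : ((shift^[i] x, -(j : ℤ), y) : (ℕ → A) × ℤ × (ℕ → A)) ∈ GX X :=
    ⟨memX_iter hinv hx i, hy, 0, j, by norm_num,
      by show shift^[0] (shift^[i] x) = shift^[j] y
         simpa using hij⟩
  have m3 : ((y, (j : ℤ), shift^[j] y) : (ℕ → A) × ℤ × (ℕ → A)) ∈ GX X :=
    ⟨hy, memX_iter hinv hy j, j, 0, by norm_num, rfl⟩
  have hadd := hF.2.2 x i (shift^[i] x) (-(j : ℤ)) y m1 m2
  have hneg := hF.2.1 y j (shift^[j] y) m3
  calc F (x, (i : ℤ) - j, y) = F (x, (i : ℤ) + -(j : ℤ), y) := by rw [sub_eq_add_neg]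
    _ = F (x, (i : ℤ), shift^[i] x) + F (shift^[i] x, -(j : ℤ), y) := hadd
    _ = F (x, (i : ℤ), shift^[i] x) - F (y, (j : ℤ), shift^[j] y) := by
        rw [hij, hneg]; ring
    _ = _ := by rw [hom_pos hinv hF hx i, hom_pos hinv hF hy j]

end S14

/-- The map `Φ` sending `f ∈ Hom(𝒢_X, ℤ)` to `x ↦ f((x, 1, σ(x)))` induces an
isomorphism `H¹(𝒢_X) ≅ H^X`: (a) `Φ f` is continuous on `X`; (b) `Φ` is
injective on cohomology classes; (c) `Φ` is surjective on classes, with inverse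
induced by `g ↦ ((x, r-s, y) ↦ Σ_{i<r} g(σ^i x) - Σ_{j<s} g(σ^j y))`. -/
theorem stmt14 {A : Type*} [Fintype A] [TopologicalSpace A] [DiscreteTopology A]
    (X : Set (ℕ → A)) (hcl : IsClosed X) (hinv : shift '' X = X) (hsft : IsSFT X) :
    (∀ F, GrpdHom X F → ContinuousOn (fun x => F (x, 1, shift x)) X) ∧
    (∀ F F', GrpdHom X F → GrpdHom X F' →
      (∃ c : (ℕ → A) → ℤ, ContinuousOn c X ∧ ∀ x ∈ X,
        F (x, 1, shift x) - F' (x, 1, shift x) = c x - c (shift x)) →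
      ∃ c : (ℕ → A) → ℤ, ContinuousOn c X ∧
        ∀ γ ∈ GX X, F γ - F' γ = c γ.1 - c γ.2.2) ∧
    (∀ g : (ℕ → A) → ℤ, ContinuousOn g X →
      ∃ F, GrpdHom X F ∧ (∀ x ∈ X, F (x, 1, shift x) = g x) ∧
        ∀ x x' : ℕ → A, ∀ r s : ℕ, x ∈ X → x' ∈ X →
          shift^[r] x = shift^[s] x' →
          F (x, (r : ℤ) - (s : ℤ), x') =
            ∑ i ∈ Finset.range r, g (shift^[i] x) -
              ∑ j ∈ Finset.range s, g (shift^[j] x')) := by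
  refine ⟨?_, ?_, ?_⟩
  · -- (a) continuity
    intro F hF x hx
    have hsx : shift x ∈ X := by rw [← hinv]; exact ⟨x, hx, rfl⟩
    have hγ : ((x, (1 : ℤ), shift x) : (ℕ → A) × ℤ × (ℕ → A)) ∈ GX X :=
      S14.mem_GX.mpr ⟨hx, hsx, 1, 0, by norm_num, rfl⟩
    obtain ⟨S, ⟨i, j, U, U', hUo, hU'o, rfl⟩, hγS, hconst⟩ := hF.1 _ hγ
    obtain ⟨hxU, hsxU', hij, -⟩ := hγS
    have hji : i = j + 1 := by
      have : (1 : ℤ) = (i : ℤ) - j := hij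
      omega
    subst hji
    have hmem : {w | F (w, 1, shift w) = F (x, 1, shift x)} ∈ nhdsWithin x X := by
      refine mem_nhdsWithin.mpr ⟨U ∩ shift ⁻¹' U',
        hUo.inter (S14.continuous_shift.isOpen_preimage _ hU'o), ⟨hxU, hsxU'⟩, ?_⟩
      rintro w ⟨⟨hwU, hwU'⟩, hwX⟩
      have hwsX : shift w ∈ X := by rw [← hinv]; exact ⟨w, hwX, rfl⟩
      refine hconst (w, 1, shift w) ⟨⟨hwU, hwU', hij, ?_⟩,
        S14.mem_GX.mpr ⟨hwX, hwsX, 1, 0, by norm_num, rfl⟩⟩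
      show shift^[j + 1] w = shift^[j] (shift w)
      rw [Function.iterate_succ_apply]
    have heq : (fun w => F (w, 1, shift w)) =ᶠ[nhdsWithin x X]
        fun _ => F (x, 1, shift x) := hmem
    exact Filter.Tendsto.congr' heq.symm tendsto_const_nhds
  · -- (b) injectivity on classes
    rintro F F' hF hF' ⟨c, hc, hd⟩
    refine ⟨c, hc, ?_⟩
    rintro ⟨x, n, y⟩ hγ
    obtain ⟨hx, hy, i, j, hn, hij⟩ := S14.mem_GX.mp hγ
    show F (x, n, y) - F' (x, n, y) = c x - c y
    rw [hn, S14.hom_eval hinv hF hx hy i j hij, S14.hom_eval hinv hF' hx hy i j hij]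
    have t : ∀ k : ℕ, ∀ z : (ℕ → A), z ∈ X →
        F (shift^[k] z, 1, shift^[k + 1] z) - F' (shift^[k] z, 1, shift^[k + 1] z)
          = c (shift^[k] z) - c (shift^[k + 1] z) := by
      intro k z hz
      have := hd (shift^[k] z) (S14.memX_iter hinv hz k)
      rwa [← Function.iterate_succ_apply' shift k z] at this
    have e1 : ∑ k ∈ Finset.range i, F (shift^[k] x, 1, shift^[k + 1] x)
        - ∑ k ∈ Finset.range i, F' (shift^[k] x, 1, shift^[k + 1] x)
        = c x - c (shift^[i] x) := by
      rw [← Finset.sum_sub_distrib,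
        Finset.sum_congr rfl fun k _ => t k x hx,
        Finset.sum_range_sub' (fun k => c (shift^[k] x)) i]
      simp
    have e2 : ∑ k ∈ Finset.range j, F (shift^[k] y, 1, shift^[k + 1] y)
        - ∑ k ∈ Finset.range j, F' (shift^[k] y, 1, shift^[k + 1] y)
        = c y - c (shift^[j] y) := by
      rw [← Finset.sum_sub_distrib,
        Finset.sum_congr rfl fun k _ => t k y hy,
        Finset.sum_range_sub' (fun k => c (shift^[k] y)) j]
      simp
    rw [hij] at e1
    linarith
  · -- (c) surjectivity on classes
    intro g hg
    refine ⟨S14.Fg g, S14.Fg_hom hinv hg, fun x _ => ?_, fun x x' r s _ _ h => ?_⟩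
    · rw [S14.Fg_eval g (show (1 : ℤ) = ((1 : ℕ) : ℤ) - ((0 : ℕ) : ℤ) by norm_num)
        (show shift^[1] x = shift^[0] (shift x) from rfl)]
      simp
    · exact S14.Fg_eval g rfl h
end

section
/- Let X be a one-sided shift of finite type and f ∈ Hom(𝒢_X, ℤ) a continuous groupoid homomorphism such that f((x, lp(x), x)) ≥ 0 for every eventually periodic point x ∈ X. Then there exists h ∈ C(X, ℤ) such that f((x, 1, σ(x))) + h(x) − h(σ(x)) ≥ 0 for all x ∈ X; that is, the class of x ↦ f((x, 1, σ(x))) lies in the positive cone H^X_+ = {[g] ∈ H^X : ∃ representative g' with g'(x) ≥ 0 for all x}. -/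
/-- `x` is eventually periodic. -/
def EvPeriodic {A : Type*} (x : ℕ → A) : Prop :=
  ∃ m p : ℕ, 0 < p ∧ shift^[m + p] x = shift^[m] x

/-- The least period `lp(x)` of an eventually periodic point. -/
noncomputable def leastPeriod {A : Type*} (x : ℕ → A) : ℕ :=
  sInf {p | 0 < p ∧ ∃ a b : ℕ, p + b = a ∧ shift^[a] x = shift^[b] x}

/-!
Write `f x = F (x, 1, σ x)`. Additivity of `F` turns `F (x, n, σⁿ x)` into the Birkhoff sum of
`f` along the first `n` points of the orbit of `x`, so the hypothesis says that `f` sums to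
something nonnegative over every periodic orbit. Since `F` is locally constant and `X` is compact,
`f` only depends on the first `m` coordinates, and a point `y` with a length `n` is a path of
length `n` in the `m`-block graph of `X`. A path longer than the number of `m`-blocks revisits a
block; since `X` is of finite type, the loop in between closes up to a periodic point of `X`, so
it has nonnegative weight and cutting it out does not increase the weight. Hence path weights are
bounded below, and `h x`, the infimum of the weights of the paths `(y, n)` with `σⁿ y = x`, is
finite. It depends only on the `m`-block of `x`, because paths can be spliced onto any point with
the same block, and `h (σ x) ≤ h x + f x` because a path to `x` extends by one step to `σ x`.
-/

open Function PiNat Set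

section Words

variable {A : Type*}

lemma iterate_shift_apply (x : ℕ → A) (n k : ℕ) : shift^[n] x k = x (k + n) := by
  induction n generalizing x with
  | zero => rfl
  | succ n ih => exact ih (shift x)

def splice (a : ℕ) (y z : ℕ → A) : ℕ → A := fun k => if k < a then y k else z (k - a)

lemma splice_add (a : ℕ) (y z : ℕ → A) (k : ℕ) : splice a y z (a + k) = z k := by
  simp [splice]

lemma iterate_shift_splice (a : ℕ) (y z : ℕ → A) : shift^[a] (splice a y z) = z := by
  funext k
  rw [iterate_shift_apply, add_comm, splice_add]

lemma splice_mem_cylinder {a L : ℕ} {y z : ℕ → A} (hov : shift^[a] y ∈ cylinder z L) :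
    splice a y z ∈ cylinder y (a + L) := by
  intro k hk
  rcases lt_or_ge k a with h | h
  · simp [splice, h]
  · obtain ⟨j, rfl⟩ := Nat.exists_eq_add_of_le h
    rw [splice_add, ← hov j (by omega), iterate_shift_apply, add_comm]

def subword (x : ℕ → A) (c L : ℕ) : List A := List.ofFn fun i : Fin L => x (c + i)

lemma subword_append (x : ℕ → A) {c c' : ℕ} (L₁ L₂ : ℕ) (h : c + L₁ = c') :
    subword x c L₁ ++ subword x c' L₂ = subword x c (L₁ + L₂) := by
  subst h
  simp [subword, List.ofFn_add, add_assoc]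

lemma subword_congr {x y : ℕ → A} {c d L : ℕ} (h : ∀ k < L, x (c + k) = y (d + k)) :
    subword x c L = subword y d L :=
  List.ofFn_inj.2 (funext fun i => h i i.2)

lemma appears_subword_zero_iff {X : Set (ℕ → A)} {z : ℕ → A} {L : ℕ} :
    Appears X (subword z 0 L) ↔ (X ∩ cylinder z L).Nonempty := by
  simp [Appears, subword, cylinder, Fin.forall_iff, Set.Nonempty]

def IsSFTWithMemory (X : Set (ℕ → A)) (m : ℕ) : Prop :=
  ∀ u v w : List A, v.length = m →
    Appears X (u ++ v) → Appears X (v ++ w) → Appears X (u ++ v ++ w)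

end Words

lemma mem_cylinder_mod_of_overlap {A : Type*} {y : ℕ → A} {p L : ℕ} (hp : 0 < p)
    (hov : shift^[p] y ∈ cylinder y L) : y ∈ cylinder (fun k => y (k % p)) (p + L) := by
  intro k hk
  induction k using Nat.strong_induction_on with
  | _ k ih =>
    rcases lt_or_ge k p with h | h
    · dsimp only
      rw [Nat.mod_eq_of_lt h]
    · obtain ⟨j, rfl⟩ := Nat.exists_eq_add_of_le h
      have hj : y j = y (j % p) := ih j (by omega) (by omega)
      dsimp only
      rw [Nat.add_mod_left, ← hj, ← hov j (by omega), iterate_shift_apply, add_comm]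

lemma continuous_shift {A : Type*} [TopologicalSpace A] : Continuous (shift (A := A)) :=
  continuous_pi fun n => continuous_apply (n + 1)

section Topology

variable {A : Type*} [TopologicalSpace A] [DiscreteTopology A] {X : Set (ℕ → A)}

lemma exists_cylinder_subset {U : Set (ℕ → A)} (hU : IsOpen U) {x : ℕ → A} (hx : x ∈ U) :
    ∃ n, cylinder x n ⊆ U := by
  obtain ⟨_, ⟨y, n, rfl⟩, hxy, hsub⟩ :=
    (isTopologicalBasis_cylinders _).exists_subset_of_mem_open hx hU
  exact ⟨n, (mem_cylinder_iff_eq.1 hxy).symm ▸ hsub⟩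

lemma IsClosed.mem_of_forall_inter_cylinder_nonempty (hX : IsClosed X) {z : ℕ → A}
    (h : ∀ n, (X ∩ cylinder z n).Nonempty) : z ∈ X := by
  rw [← hX.closure_eq, mem_closure_iff]
  intro U hU hz
  obtain ⟨n, hn⟩ := exists_cylinder_subset hU hz
  obtain ⟨x, hxX, hx⟩ := h n
  exact ⟨x, hn hx, hxX⟩

lemma IsSFTWithMemory.splice_mem {m₀ : ℕ} (hsft : IsSFTWithMemory X m₀) (hX : IsClosed X)
    {y z : ℕ → A} (hy : y ∈ X) (hz : z ∈ X) {a : ℕ} (hov : shift^[a] y ∈ cylinder z m₀) :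
    splice a y z ∈ X := by
  refine hX.mem_of_forall_inter_cylinder_nonempty fun L => ?_
  have huv : Appears X (subword (splice a y z) 0 a ++ subword (splice a y z) a m₀) := by
    rw [subword_append _ _ _ (zero_add a),
      subword_congr fun k hk => splice_mem_cylinder hov (0 + k) (by omega),
      appears_subword_zero_iff]
    exact ⟨y, hy, self_mem_cylinder y _⟩
  have hvw : Appears X (subword (splice a y z) a m₀ ++ subword (splice a y z) (a + m₀) L) := by
    rw [subword_append _ _ _ rfl, subword_congr (d := 0) fun k _ => by rw [splice_add, zero_add],
      appears_subword_zero_iff]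
    exact ⟨z, hz, self_mem_cylinder z _⟩
  have huvw := hsft _ _ _ (by simp [subword]) huv hvw
  rw [subword_append _ _ _ (zero_add a), subword_append _ _ _ (zero_add (a + m₀)),
    appears_subword_zero_iff] at huvw
  exact huvw.mono (inter_subset_inter_right X (cylinder_anti _ (by omega)))

lemma IsSFTWithMemory.mod_mem {m₀ : ℕ} (hsft : IsSFTWithMemory X m₀) (hX : IsClosed X)
    {y : ℕ → A} (hy : y ∈ X) {p : ℕ} (hp : 0 < p) (hov : shift^[p] y ∈ cylinder y m₀) :
    (fun k => y (k % p)) ∈ X := by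
  have hyq := mem_cylinder_mod_of_overlap hp hov
  have happrox : ∀ c, (X ∩ cylinder (fun k => y (k % p)) (c * p + m₀)).Nonempty := by
    intro c
    induction c with
    | zero => exact ⟨y, hy, fun k hk => hyq k (by omega)⟩
    | succ c ih =>
      obtain ⟨x, hx, hxq⟩ := ih
      refine ⟨splice p y x, hsft.splice_mem hX hy hx fun k hk => ?_, fun k hk => ?_⟩
      · rw [hov k hk, hyq k (by omega), hxq k (by omega)]
      · rcases lt_or_ge k p with h | h
        · simp [splice, h, Nat.mod_eq_of_lt h]
        · obtain ⟨j, rfl⟩ := Nat.exists_eq_add_of_le h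
          rw [splice_add, hxq j (by rw [add_mul] at hk; omega)]
          simp only [Nat.add_mod_left]
  refine hX.mem_of_forall_inter_cylinder_nonempty fun n => (happrox n).mono ?_
  exact inter_subset_inter_right X (cylinder_anti _ (by nlinarith))

end Topology

def DependsOnPrefix {A β : Type*} (X : Set (ℕ → A)) (m : ℕ) (f : (ℕ → A) → β) : Prop :=
  ∀ x ∈ X, ∀ y ∈ X, y ∈ cylinder x m → f y = f x

namespace DependsOnPrefix

variable {A β : Type*} {X : Set (ℕ → A)} {m : ℕ} {f : (ℕ → A) → β}

lemma mono (hf : DependsOnPrefix X m f) {m' : ℕ} (h : m ≤ m') : DependsOnPrefix X m' f :=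
  fun x hx y hy hxy => hf x hx y hy (cylinder_anti x h hxy)

lemma continuousOn [TopologicalSpace A] [DiscreteTopology A] [TopologicalSpace β]
    (hf : DependsOnPrefix X m f) : ContinuousOn f X := by
  intro x hx
  refine continuousWithinAt_const.congr_of_eventuallyEq ?_ rfl
  filter_upwards [inter_mem_nhdsWithin X ((isOpen_cylinder _ x m).mem_nhds (self_mem_cylinder x m))]
    with y hy
  exact hf x hx y hy.1 hy.2

lemma birkhoffSum_eq [AddCommMonoid β] (hf : DependsOnPrefix X m f) (hσ : MapsTo shift X X)
    {x y : ℕ → A} (hx : x ∈ X) (hy : y ∈ X) {n : ℕ} (hxy : y ∈ cylinder x (n + m)) :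
    birkhoffSum shift f n y = birkhoffSum shift f n x := by
  refine Finset.sum_congr rfl fun l hl => hf _ (hσ.iterate l hx) _ (hσ.iterate l hy) fun k hk => ?_
  rw [iterate_shift_apply, iterate_shift_apply]
  exact hxy _ (by rw [Finset.mem_range] at hl; omega)

end DependsOnPrefix

lemma IsCompact.exists_dependsOnPrefix {A β : Type*} [TopologicalSpace A] [DiscreteTopology A]
    {X : Set (ℕ → A)} (hX : IsCompact X) {f : (ℕ → A) → β}
    (hf : ∀ x ∈ X, ∃ n, ∀ y ∈ X, y ∈ cylinder x n → f y = f x) : ∃ m, DependsOnPrefix X m f := by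
  choose! n hn using hf
  obtain ⟨t, htX, hcover⟩ := hX.elim_nhds_subcover (fun x => cylinder x (n x))
    fun x _ => (isOpen_cylinder _ x _).mem_nhds (self_mem_cylinder x _)
  refine ⟨t.sup n, fun x hx y hy hxy => ?_⟩
  obtain ⟨c, hct, hxc⟩ := mem_iUnion₂.1 (hcover hx)
  have hyc : y ∈ cylinder c (n c) := fun k hk =>
    (hxy k (hk.trans_le (Finset.le_sup hct))).trans (hxc k hk)
  rw [hn c (htX c hct) y hy hyc, hn c (htX c hct) x hx hxc]

lemma Function.IsPeriodicPt.birkhoffSum_mul {α M : Type*} [AddCommMonoid M] {f : α → α} {x : α}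
    {q : ℕ} (h : IsPeriodicPt f q x) (g : α → M) (k : ℕ) :
    birkhoffSum f g (k * q) x = k • birkhoffSum f g q x := by
  induction k with
  | zero => simp
  | succ k ih => rw [add_mul, one_mul, birkhoffSum_add, (h.const_mul k).eq, ih, succ_nsmul]

lemma leastPeriod_eq_minimalPeriod {A : Type*} {x : ℕ → A} (hx : x ∈ periodicPts shift) :
    leastPeriod x = minimalPeriod shift x := by
  have hmin : minimalPeriod shift x ∈
      {p | 0 < p ∧ ∃ a b : ℕ, p + b = a ∧ shift^[a] x = shift^[b] x} :=
    ⟨minimalPeriod_pos_of_mem_periodicPts hx, _, 0, rfl, isPeriodicPt_minimalPeriod shift x⟩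
  refine le_antisymm (Nat.sInf_le hmin) ?_
  obtain ⟨hpos, a, b, rfl, hab⟩ := Nat.sInf_mem ⟨_, hmin⟩
  refine IsPeriodicPt.minimalPeriod_le hpos
    (isPeriodicPt_of_mem_periodicPts_of_isPeriodicPt_iterate hx (n := b) ?_)
  rwa [IsPeriodicPt, IsFixedPt, ← iterate_add_apply]

section GX

variable {A : Type*} {X : Set (ℕ → A)} {x : ℕ → A}

lemma mem_GX_iterate (hσ : MapsTo shift X X) (hx : x ∈ X) (n : ℕ) :
    (x, (n : ℤ), shift^[n] x) ∈ GX X :=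
  ⟨hx, hσ.iterate n hx, n, 0, by simp, rfl⟩

lemma mem_GX_shift (hσ : MapsTo shift X X) (hx : x ∈ X) : (x, 1, shift x) ∈ GX X :=
  ⟨hx, hσ hx, 1, 0, by simp, rfl⟩

end GX

namespace GrpdHom

variable {A : Type*} [TopologicalSpace A] {X : Set (ℕ → A)} {F : (ℕ → A) × ℤ × (ℕ → A) → ℤ}

lemma apply_self_zero (hF : GrpdHom X F) {x : ℕ → A} (hx : x ∈ X) : F (x, 0, x) = 0 := by
  have h0 : (x, (0 : ℤ), x) ∈ GX X := ⟨hx, hx, 0, 0, by simp, rfl⟩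
  simpa using hF.2.2 x 0 x 0 x h0 h0

lemma apply_iterate (hF : GrpdHom X F) (hσ : MapsTo shift X X) {x : ℕ → A} (hx : x ∈ X)
    (n : ℕ) : F (x, n, shift^[n] x) = birkhoffSum shift (fun y => F (y, 1, shift y)) n x := by
  induction n with
  | zero => simpa using hF.apply_self_zero hx
  | succ n ih =>
    rw [birkhoffSum_succ, iterate_succ_apply', Nat.cast_succ,
      hF.2.2 _ _ _ _ _ (mem_GX_iterate hσ hx n) (mem_GX_shift hσ (hσ.iterate n hx)), ih]

lemma birkhoffSum_nonneg_of_isPeriodicPt (hF : GrpdHom X F) (hσ : MapsTo shift X X)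
    (hpos : ∀ x ∈ X, EvPeriodic x → 0 ≤ F (x, (leastPeriod x : ℤ), x))
    {x : ℕ → A} (hx : x ∈ X) {p : ℕ} (hp : 0 < p) (hper : IsPeriodicPt shift p x) :
    0 ≤ birkhoffSum shift (fun y => F (y, 1, shift y)) p x := by
  have hmin := isPeriodicPt_minimalPeriod shift x
  have hq := hpos x hx ⟨0, p, hp, by rw [zero_add]; exact hper⟩
  have hsum := hF.apply_iterate hσ hx (minimalPeriod shift x)
  rw [hmin.eq] at hsum
  rw [leastPeriod_eq_minimalPeriod (mk_mem_periodicPts hp hper), hsum] at hq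
  obtain ⟨k, rfl⟩ := hper.minimalPeriod_dvd
  rw [mul_comm, hmin.birkhoffSum_mul]
  exact nsmul_nonneg hq k

lemma exists_dependsOnPrefix [DiscreteTopology A] (hF : GrpdHom X F) (hX : IsCompact X)
    (hσ : MapsTo shift X X) : ∃ m, DependsOnPrefix X m fun x => F (x, 1, shift x) := by
  refine hX.exists_dependsOnPrefix fun x hx => ?_
  obtain ⟨S, ⟨i, j, U, U', hU, hU', rfl⟩, ⟨hxU, hxU', hij, -⟩, hconst⟩ :=
    hF.1 _ (mem_GX_shift hσ hx)
  obtain rfl : i = j + 1 := by simp only at hij; omega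
  obtain ⟨n, hn⟩ :=
    exists_cylinder_subset (hU.inter (hU'.preimage continuous_shift)) ⟨hxU, hxU'⟩
  exact ⟨n, fun y hy hyx =>
    hconst _ ⟨⟨(hn hyx).1, (hn hyx).2, hij, iterate_succ_apply shift j y⟩, mem_GX_shift hσ hy⟩⟩

end GrpdHom

lemma exists_iterate_mem_cylinder {A : Type*} [Fintype A] (y : ℕ → A) (m : ℕ) :
    ∃ i p, 0 < p ∧ i + p ≤ Fintype.card (Fin m → A) ∧
      shift^[p] (shift^[i] y) ∈ cylinder (shift^[i] y) m := by
  obtain ⟨a, b, hne, hab⟩ := Fintype.exists_ne_map_eq_of_card_lt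
    (fun t : Fin (Fintype.card (Fin m → A) + 1) => fun k : Fin m => shift^[t] y k) (by simp)
  have hwin : ∀ {i p}, (fun k : Fin m => shift^[i] y k) = (fun k : Fin m => shift^[p + i] y k) →
      shift^[p] (shift^[i] y) ∈ cylinder (shift^[i] y) m := fun h k hk => by
    rw [← iterate_add_apply]; exact (congrFun h ⟨k, hk⟩).symm
  rcases lt_or_gt_of_ne (Fin.val_ne_of_ne hne) with h | h
  · obtain ⟨p, hp⟩ := Nat.exists_eq_add_of_lt h
    refine ⟨a, p + 1, by omega, by omega, hwin ?_⟩
    rw [show p + 1 + a = b by omega]; exact hab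
  · obtain ⟨p, hp⟩ := Nat.exists_eq_add_of_lt h
    refine ⟨b, p + 1, by omega, by omega, hwin ?_⟩
    rw [show p + 1 + b = a by omega]; exact hab.symm

section PathWeights

variable {A : Type*} {X : Set (ℕ → A)} {f : (ℕ → A) → ℤ}

def pathWeights (X : Set (ℕ → A)) (f : (ℕ → A) → ℤ) (x : ℕ → A) : Set ℤ :=
  {s | ∃ y ∈ X, ∃ n, shift^[n] y = x ∧ birkhoffSum shift f n y = s}

lemma zero_mem_pathWeights {x : ℕ → A} (hx : x ∈ X) : 0 ∈ pathWeights X f x :=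
  ⟨x, hx, 0, rfl, birkhoffSum_zero ..⟩

lemma add_mem_pathWeights_shift {x : ℕ → A} {s : ℤ} (hs : s ∈ pathWeights X f x) :
    s + f x ∈ pathWeights X f (shift x) := by
  obtain ⟨y, hy, n, rfl, rfl⟩ := hs
  exact ⟨y, hy, n + 1, iterate_succ_apply' .., birkhoffSum_succ ..⟩

end PathWeights

section Potential

variable {A : Type*} [TopologicalSpace A] [DiscreteTopology A] {X : Set (ℕ → A)} {m₀ m : ℕ}
  {f : (ℕ → A) → ℤ}

lemma birkhoffSum_nonneg_of_overlap (hX : IsClosed X) (hsft : IsSFTWithMemory X m₀)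
    (hm : m₀ ≤ m) (hσ : MapsTo shift X X) (hf : DependsOnPrefix X m f)
    (hcyc : ∀ y ∈ X, ∀ p, 0 < p → IsPeriodicPt shift p y → 0 ≤ birkhoffSum shift f p y)
    {y : ℕ → A} (hy : y ∈ X) {p : ℕ} (hp : 0 < p) (hov : shift^[p] y ∈ cylinder y m) :
    0 ≤ birkhoffSum shift f p y := by
  have hq := hsft.mod_mem hX hy hp (cylinder_anti y hm hov)
  rw [hf.birkhoffSum_eq hσ hq hy (mem_cylinder_mod_of_overlap hp hov)]
  refine hcyc _ hq p hp (funext fun k => ?_)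
  rw [iterate_shift_apply]
  simp only [Nat.add_mod_right]

lemma exists_shorter_path [Fintype A] (hX : IsClosed X) (hsft : IsSFTWithMemory X m₀)
    (hm : m₀ ≤ m) (hσ : MapsTo shift X X) (hf : DependsOnPrefix X m f)
    (hcyc : ∀ y ∈ X, ∀ p, 0 < p → IsPeriodicPt shift p y → 0 ≤ birkhoffSum shift f p y)
    {y : ℕ → A} (hy : y ∈ X) {n : ℕ} (hn : Fintype.card (Fin m → A) < n) :
    ∃ z ∈ X, ∃ n' < n, shift^[n'] z = shift^[n] y ∧
      birkhoffSum shift f n' z ≤ birkhoffSum shift f n y := by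
  obtain ⟨i, p, hp, hipN, hloop⟩ := exists_iterate_mem_cylinder y m
  obtain ⟨r, rfl⟩ := Nat.exists_eq_add_of_le (hipN.trans hn.le)
  have hjump : shift^[i] y ∈ cylinder (shift^[p + i] y) m := by
    rw [mem_cylinder_comm, iterate_add_apply]; exact hloop
  have hz := hsft.splice_mem hX hy (hσ.iterate _ hy) (cylinder_anti _ hm hjump)
  have hzi : shift^[i] (splice i y (shift^[p + i] y)) = shift^[p + i] y := iterate_shift_splice ..
  refine ⟨splice i y (shift^[p + i] y), hz, i + r, by omega, ?_, ?_⟩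
  · rw [add_comm i, iterate_add_apply, hzi, ← iterate_add_apply, add_comm (i + p), add_comm i]
  · have hcycle := birkhoffSum_nonneg_of_overlap hX hsft hm hσ hf hcyc (hσ.iterate i hy) hp hloop
    rw [birkhoffSum_add, hzi, hf.birkhoffSum_eq hσ hy hz (splice_mem_cylinder hjump),
      birkhoffSum_add, birkhoffSum_add, add_comm i p]
    linarith

lemma exists_short_path [Fintype A] (hX : IsClosed X) (hsft : IsSFTWithMemory X m₀)
    (hm : m₀ ≤ m) (hσ : MapsTo shift X X) (hf : DependsOnPrefix X m f)
    (hcyc : ∀ y ∈ X, ∀ p, 0 < p → IsPeriodicPt shift p y → 0 ≤ birkhoffSum shift f p y)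
    {y : ℕ → A} (hy : y ∈ X) (n : ℕ) :
    ∃ z ∈ X, ∃ n' ≤ Fintype.card (Fin m → A), shift^[n'] z = shift^[n] y ∧
      birkhoffSum shift f n' z ≤ birkhoffSum shift f n y := by
  induction n using Nat.strong_induction_on generalizing y with
  | _ n ih =>
    rcases le_or_gt n (Fintype.card (Fin m → A)) with hn | hn
    · exact ⟨y, hy, n, hn, rfl, le_rfl⟩
    · obtain ⟨z, hz, n', hn', hzy, hw⟩ := exists_shorter_path hX hsft hm hσ hf hcyc hy hn
      obtain ⟨z', hz', n'', hn'', hz'z, hw'⟩ := ih n' hn' hz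
      exact ⟨z', hz', n'', hn'', hz'z.trans hzy, hw'.trans hw⟩

lemma exists_forall_le_birkhoffSum [Fintype A] (hX : IsClosed X) (hsft : IsSFTWithMemory X m₀)
    (hm : m₀ ≤ m) (hσ : MapsTo shift X X) (hf : DependsOnPrefix X m f)
    (hcyc : ∀ y ∈ X, ∀ p, 0 < p → IsPeriodicPt shift p y → 0 ≤ birkhoffSum shift f p y) :
    ∃ c, ∀ y ∈ X, ∀ n, c ≤ birkhoffSum shift f n y := by
  obtain ⟨b, hb⟩ := hX.isCompact.bddBelow_image hf.continuousOn
  refine ⟨Fintype.card (Fin m → A) * min b 0, fun y hy n => ?_⟩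
  obtain ⟨z, hz, n', hn', -, hw⟩ := exists_short_path hX hsft hm hσ hf hcyc hy n
  calc (Fintype.card (Fin m → A) : ℤ) * min b 0 ≤ n' * min b 0 :=
        mul_le_mul_of_nonpos_right (by exact_mod_cast hn') (min_le_right b 0)
    _ ≤ birkhoffSum shift f n' z := by
        simpa [birkhoffSum] using Finset.card_nsmul_le_sum (Finset.range n') _ (min b 0) fun k _ =>
          (min_le_left b 0).trans (hb (mem_image_of_mem f (hσ.iterate k hz)))
    _ ≤ birkhoffSum shift f n y := hw

lemma pathWeights_subset (hX : IsClosed X) (hsft : IsSFTWithMemory X m₀) (hm : m₀ ≤ m)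
    (hσ : MapsTo shift X X) (hf : DependsOnPrefix X m f) {x x' : ℕ → A} (hx' : x' ∈ X)
    (hxx' : x ∈ cylinder x' m) : pathWeights X f x ⊆ pathWeights X f x' := by
  rintro _ ⟨y, hy, n, rfl, rfl⟩
  have hy' := hsft.splice_mem hX hy hx' (cylinder_anti _ hm hxx')
  exact ⟨_, hy', n, iterate_shift_splice .., hf.birkhoffSum_eq hσ hy hy' (splice_mem_cylinder hxx')⟩

theorem exists_nonneg_add_sub_shift [Fintype A] (hX : IsClosed X)
    (hsft : IsSFTWithMemory X m₀) (hm : m₀ ≤ m) (hσ : MapsTo shift X X)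
    (hf : DependsOnPrefix X m f)
    (hcyc : ∀ y ∈ X, ∀ p, 0 < p → IsPeriodicPt shift p y → 0 ≤ birkhoffSum shift f p y) :
    ∃ h : (ℕ → A) → ℤ, ContinuousOn h X ∧ ∀ x ∈ X, 0 ≤ f x + h x - h (shift x) := by
  obtain ⟨c, hc⟩ := exists_forall_le_birkhoffSum hX hsft hm hσ hf hcyc
  have hbdd (x : ℕ → A) : BddBelow (pathWeights X f x) := by
    refine ⟨c, ?_⟩
    rintro _ ⟨y, hy, n, -, rfl⟩
    exact hc y hy n
  refine ⟨fun x => sInf (pathWeights X f x), ?_, fun x hx => ?_⟩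
  · refine DependsOnPrefix.continuousOn (m := m) fun x hx x' hx' hx'x => congrArg sInf ?_
    exact (pathWeights_subset hX hsft hm hσ hf hx hx'x).antisymm
      (pathWeights_subset hX hsft hm hσ hf hx' ((mem_cylinder_comm _ _ _).1 hx'x))
  · have hstep : sInf (pathWeights X f (shift x)) - f x ≤ sInf (pathWeights X f x) :=
      le_csInf ⟨0, zero_mem_pathWeights hx⟩ fun s hs =>
        sub_le_iff_le_add.2 (csInf_le (hbdd _) (add_mem_pathWeights_shift hs))
    dsimp only
    linarith

end Potential

/-- If `f ∈ Hom(𝒢_X, ℤ)` satisfies `f((x, lp(x), x)) ≥ 0` for every eventually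
periodic `x ∈ X`, then the class of `x ↦ f((x, 1, σ(x)))` lies in the positive
cone `H^X_+`: there is a continuous `h : X → ℤ` with
`f((x, 1, σ(x))) + h(x) - h(σ(x)) ≥ 0` on `X`. -/
theorem stmt15 {A : Type*} [Fintype A] [TopologicalSpace A] [DiscreteTopology A]
    (X : Set (ℕ → A)) (hcl : IsClosed X) (hinv : shift '' X = X) (hsft : IsSFT X)
    (F : (ℕ → A) × ℤ × (ℕ → A) → ℤ) (hF : GrpdHom X F)
    (hpos : ∀ x ∈ X, EvPeriodic x → 0 ≤ F (x, (leastPeriod x : ℤ), x)) :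
    ∃ h : (ℕ → A) → ℤ, ContinuousOn h X ∧
      ∀ x ∈ X, 0 ≤ F (x, 1, shift x) + h x - h (shift x) := by
  obtain ⟨m₀, -, hsft⟩ := hsft
  have hσ : MapsTo shift X X := (mapsTo_image shift X).mono_right hinv.subset
  obtain ⟨m, hf⟩ := hF.exists_dependsOnPrefix hcl.isCompact hσ
  exact exists_nonneg_add_sub_shift hcl hsft (le_max_left m₀ m) hσ (hf.mono (le_max_right m₀ m))
    fun y hy p hp hper => hF.birkhoffSum_nonneg_of_isPeriodicPt hσ hpos hy hp hper
end

section
/- Let E = (E⁰, E¹, r, s) be a finite directed graph and ω : E¹ → ℤ a weight function such that for every cycle w¹w²…wⁿ in E (meaning r(wⁱ) = s(w^{i+1}) for 1 ≤ i < n and r(wⁿ) = s(w¹)), the total weight Σ_{i=1}^{n} ω(wⁱ) is nonnegative. Then there exists κ : E⁰ → ℤ such that ω(w) + κ(s(w)) − κ(r(w)) ≥ 0 for every edge w ∈ E¹. -/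
/-!
Take for `κ v` the least weight of a walk ending at `v` (the empty walk included);
appending an edge `e` to a walk ending at `s e` gives `κ (r e) ≤ κ (s e) + ω e`. The minimum
exists because walk weights are bounded below: a walk visiting a vertex twice contains a cycle,
whose weight is nonnegative, and removing it leaves a shorter walk, so every walk weighs at least
as much as one of length at most `|E⁰|`.
-/

namespace BoyleHandelman

theorem exists_eq_append_of_not_nodup_map {α β : Type*} {f : α → β} :
    ∀ {l : List α}, ¬(l.map f).Nodup →
      ∃ l₁ a l₂ b l₃, l = l₁ ++ a :: l₂ ++ b :: l₃ ∧ f a = f b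
  | [], h => absurd List.nodup_nil h
  | x :: t, h => by
    rw [List.map_cons, List.nodup_cons, not_and_or, not_not] at h
    rcases h with hx | ht
    · obtain ⟨b, hb, hbx⟩ := List.mem_map.1 hx
      obtain ⟨l₂, l₃, rfl⟩ := List.mem_iff_append.1 hb
      exact ⟨[], x, l₂, b, l₃, by simp, hbx.symm⟩
    · obtain ⟨l₁, a, l₂, b, l₃, rfl, hab⟩ := exists_eq_append_of_not_nodup_map ht
      exact ⟨x :: l₁, a, l₂, b, l₃, by simp, hab⟩

variable {V E : Type*} {r s : E → V} {ω : E → ℤ}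

variable (r s) in
def IsWalk (l : List E) : Prop := l.IsChain fun a b => r a = s b

variable (r s) in
def IsWalkTo (v : V) (l : List E) : Prop := IsWalk r s l ∧ ∀ a ∈ l.getLast?, r a = v

variable (r s ω) in
def NonnegOnCycles : Prop :=
  ∀ n : ℕ, ∀ w : Fin (n + 1) → E,
    (∀ i : Fin (n + 1), r (w i) = s (w (i + 1))) → 0 ≤ ∑ i, ω (w i)

theorem IsWalkTo.append_singleton {l : List E} {e : E} (h : IsWalkTo r s (s e) l) :
    IsWalkTo r s (r e) (l ++ [e]) :=
  ⟨List.isChain_append.2 ⟨h.1, List.isChain_singleton e, fun a ha _ hb => by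
    cases hb; exact h.2 a ha⟩, by simp⟩

theorem IsWalk.remove_cycle {l₁ l₂ l₃ : List E} {a b : E}
    (h : IsWalk r s (l₁ ++ a :: l₂ ++ b :: l₃)) (hab : s a = s b) :
    IsWalk r s (l₁ ++ b :: l₃) ∧ IsWalkTo r s (s a) (a :: l₂) := by
  obtain ⟨h₁₂, h₃, hjoin₂₃⟩ := List.isChain_append.1 h
  obtain ⟨h₁, h₂, hjoin₁₂⟩ := List.isChain_append.1 h₁₂
  refine ⟨List.isChain_append.2 ⟨h₁, h₃, fun x hx y hy => ?_⟩, h₂, fun x hx => ?_⟩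
  · cases hy
    rw [← hab]
    exact hjoin₁₂ x hx a rfl
  · rw [hab]
    exact hjoin₂₃ x (List.getLast?_append_cons l₁ a l₂ ▸ hx) b rfl

theorem NonnegOnCycles.sum_nonneg_of_isWalkTo_cons (hcyc : NonnegOnCycles r s ω)
    {a : E} {t : List E} (h : IsWalkTo r s (s a) (a :: t)) :
    0 ≤ ((a :: t).map ω).sum := by
  rw [← List.ofFn_getElem_eq_map, List.sum_ofFn]
  refine hcyc t.length (fun i => (a :: t)[i]) fun i => ?_
  have hclosed : IsWalk r s (a :: t ++ [a]) := h.append_singleton.1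
  have := List.isChain_iff_getElem.1 hclosed i (by simp; omega)
  rw [List.getElem_append_left (by simp; omega)] at this
  simp only [Fin.getElem_fin, Fin.val_add_one]
  split_ifs with hi
  · subst hi
    simpa using this
  · rwa [List.getElem_append_left] at this

theorem IsWalk.card_nsmul_le_sum [Fintype V] (hcyc : NonnegOnCycles r s ω)
    {c : ℤ} (hc₀ : c ≤ 0) (hc : ∀ e, c ≤ ω e) {l : List E} (hl : IsWalk r s l) :
    Fintype.card V • c ≤ (l.map ω).sum := by
  by_cases hnodup : (l.map s).Nodup
  · calc Fintype.card V • c ≤ (l.map ω).length • c :=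
          nsmul_le_nsmul_left_of_nonpos hc₀ (by simpa using hnodup.length_le_card)
      _ ≤ (l.map ω).sum := List.card_nsmul_le_sum _ _ (by simp [hc])
  · obtain ⟨l₁, a, l₂, b, l₃, hsplit, hab⟩ := exists_eq_append_of_not_nodup_map hnodup
    obtain ⟨hshort, hcycle⟩ := (hsplit ▸ hl).remove_cycle hab
    have hshort_bound := IsWalk.card_nsmul_le_sum hcyc hc₀ hc hshort
    have hcycle_nonneg := hcyc.sum_nonneg_of_isWalkTo_cons hcycle
    rw [hsplit]
    simp only [List.map_append, List.sum_append, List.map_cons, List.sum_cons] at *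
    linarith
termination_by l.length
decreasing_by rw [hsplit]; simp

theorem NonnegOnCycles.exists_le_sum_of_isWalk [Fintype V] [Fintype E]
    (hcyc : NonnegOnCycles r s ω) : ∃ C, ∀ l, IsWalk r s l → C ≤ (l.map ω).sum := by
  refine ⟨Fintype.card V • -∑ e, |ω e|, fun l hl => hl.card_nsmul_le_sum hcyc ?_ fun e => ?_⟩
  · exact neg_nonpos.2 (Finset.sum_nonneg fun e _ => abs_nonneg (ω e))
  · have := Finset.single_le_sum (fun e _ => abs_nonneg (ω e)) (Finset.mem_univ e)
    linarith [neg_abs_le (ω e)]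

end BoyleHandelman

open BoyleHandelman in
/-- Boyle–Handelman: if `ω : E¹ → ℤ` is a weight on the edges of a finite
directed graph whose total weight around every cycle is nonnegative, then there
is a potential `κ : E⁰ → ℤ` with `ω(w) + κ(s(w)) - κ(r(w)) ≥ 0` for every
edge `w`. A cycle of length `n + 1` is a tuple `w : Fin (n+1) → E` with
`r(wⁱ) = s(w^{i+1})` cyclically. -/
theorem stmt16 {V E : Type*} [Fintype V] [Fintype E]
    (r s : E → V) (ω : E → ℤ)
    (hcyc : ∀ n : ℕ, ∀ w : Fin (n + 1) → E,
      (∀ i : Fin (n + 1), r (w i) = s (w (i + 1))) → 0 ≤ ∑ i, ω (w i)) :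
    ∃ κ : V → ℤ, ∀ e : E, 0 ≤ ω e + κ (s e) - κ (r e) := by
  obtain ⟨C, hC⟩ := NonnegOnCycles.exists_le_sum_of_isWalk hcyc
  have hleast : ∀ v, ∃ k, (∃ l, IsWalkTo r s v l ∧ (l.map ω).sum = k) ∧
      ∀ x, (∃ l, IsWalkTo r s v l ∧ (l.map ω).sum = x) → k ≤ x := fun v =>
    Int.exists_least_of_bdd ⟨C, by rintro _ ⟨l, hl, rfl⟩; exact hC l hl.1⟩
      ⟨0, [], ⟨List.isChain_nil, by simp⟩, rfl⟩
  choose κ hκ hκ_le using hleast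
  refine ⟨κ, fun e => ?_⟩
  obtain ⟨l, hl, hlκ⟩ := hκ (s e)
  have := hκ_le (r e) _ ⟨l ++ [e], hl.append_singleton, rfl⟩
  simp only [List.map_append, List.sum_append, hlκ, List.map_cons, List.map_nil,
    List.sum_cons, List.sum_nil] at this
  linarith
end

section
/- Let X be a one-sided shift space, f ∈ C(X, ℕ), and X^f the subshift built from the tower X_f. Let X₀ = ι_{X_f}(X × {0}) ⊆ X^f. Then X₀ is a compact open subset of X^f which is a cross section: every point of X^f is of the form σ_{X^f}^k(x) with x ∈ X₀ and k ∈ ℕ₀; for every x ∈ X₀ there is k ∈ ℕ with σ_{X^f}^k(x) ∈ X₀; the first-return time function frt(x) = min{k ∈ ℕ : σ_{X^f}^k(x) ∈ X₀} is continuous on X₀ (and equals f(σ(π(x))) where π(ι_{X_f}(x,0)) = x); and the first-return map σ_{X₀}(x) = σ_{X^f}^{frt(x)}(x) makes (X₀, σ_{X₀}) conjugate to (X, σ_X) via x ↦ ι_{X_f}(x, 0). -/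
/-- The tower `X_f` over `X`. -/
def XfSet {A : Type*} (X : Set (ℕ → A)) (f : (ℕ → A) → ℕ) : Set ((ℕ → A) × ℕ) :=
  {p | p.1 ∈ X ∧ p.2 < f p.1}

/-- The tower map `σ_{X_f}`. -/
def sigmaf {A : Type*} (f : (ℕ → A) → ℕ) (p : (ℕ → A) × ℕ) : (ℕ → A) × ℕ :=
  if p.2 = 0 then (shift p.1, f (shift p.1) - 1) else (p.1, p.2 - 1)

/-- The itinerary embedding `ι_{X_f} : X_f → (A × ℕ)^{ℕ₀}`. -/
def iotaf {A : Type*} (f : (ℕ → A) → ℕ) (p : (ℕ → A) × ℕ) : ℕ → A × ℕ :=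
  fun t => (((sigmaf f)^[t] p).1 0, ((sigmaf f)^[t] p).2)

/-- The subshift `X^f = ι_{X_f}(X_f)`. -/
def Xup {A : Type*} (X : Set (ℕ → A)) (f : (ℕ → A) → ℕ) : Set (ℕ → A × ℕ) :=
  iotaf f '' XfSet X f

/-- The cross section `X₀ = ι_{X_f}(X × {0}) ⊆ X^f`. -/
def Xzero {A : Type*} (X : Set (ℕ → A)) (f : (ℕ → A) → ℕ) : Set (ℕ → A × ℕ) :=
  (fun x => iotaf f (x, 0)) '' X

/-- The first-return time to the cross section `X₀`. -/
noncomputable def frt {A : Type*} (X : Set (ℕ → A)) (f : (ℕ → A) → ℕ)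
    (w : ℕ → A × ℕ) : ℕ :=
  sInf {k : ℕ | 0 < k ∧ shift^[k] w ∈ Xzero X f}

/-!
The tower map lowers the level by one until it reaches level `0`, where it applies `σ_X` and
jumps to the top level `f (σ_X x) - 1`. So starting from `(x, 0)` the orbit climbs down the
column over `σ_X x` and first returns to level `0` after exactly `f (σ_X x)` steps, at
`(σ_X x, 0)`; since `ι_{X_f}` intertwines the two shifts, this gives the return time and the
conjugacy. All the topology comes from `ℕ` being discrete: level `0` is a clopen condition on the
first letter, and on `X₀` the return time is read off the second letter as `(w 1).2 + 1`.
-/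

open Set Function

namespace Tower

variable {A : Type*} {f : (ℕ → A) → ℕ}

lemma semiconj_iotaf : Semiconj (iotaf f) (sigmaf f) shift := fun p => by
  funext t
  simp [shift, iotaf, iterate_succ_apply]

lemma shift_iterate_iotaf (p : (ℕ → A) × ℕ) (k : ℕ) :
    shift^[k] (iotaf f p) = iotaf f ((sigmaf f)^[k] p) :=
  (semiconj_iotaf.iterate_right k p).symm

lemma sigmaf_iterate_base (x : ℕ → A) {k : ℕ} (hk : 0 < k) (hkf : k ≤ f (shift x)) :
    (sigmaf f)^[k] (x, 0) = (shift x, f (shift x) - k) := by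
  induction k with
  | zero => omega
  | succ k ih =>
    rcases Nat.eq_zero_or_pos k with rfl | hpos
    · simp [sigmaf]
    · have hlevel : f (shift x) - k ≠ 0 := by omega
      rw [iterate_succ_apply', ih hpos (by omega)]
      simp only [sigmaf, hlevel, if_false, Prod.mk.injEq, true_and]
      omega

lemma sigmaf_iterate_return (x : ℕ → A) (hpos : 0 < f (shift x)) :
    (sigmaf f)^[f (shift x)] (x, 0) = (shift x, 0) := by
  rw [sigmaf_iterate_base x hpos le_rfl, Nat.sub_self]

lemma shift_iterate_return (x : ℕ → A) (hpos : 0 < f (shift x)) :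
    shift^[f (shift x)] (iotaf f (x, 0)) = iotaf f (shift x, 0) := by
  rw [shift_iterate_iotaf, sigmaf_iterate_return x hpos]

lemma iotaf_apply_one (x : ℕ → A) : iotaf f (x, 0) 1 = (x 1, f (shift x) - 1) := by
  simp [iotaf, sigmaf, shift]

lemma snd_apply_zero_of_mem_Xzero {X : Set (ℕ → A)} {w : ℕ → A × ℕ} (hw : w ∈ Xzero X f) :
    (w 0).2 = 0 := by
  obtain ⟨x, -, rfl⟩ := hw
  rfl

lemma mem_Xzero_iotaf {X : Set (ℕ → A)} {x : ℕ → A} (hx : x ∈ X) :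
    iotaf f (x, 0) ∈ Xzero X f :=
  mem_image_of_mem _ hx

section Return

variable {X : Set (ℕ → A)} {x : ℕ → A}

lemma frt_iotaf (hsx : shift x ∈ X) (hpos : 0 < f (shift x)) :
    frt X f (iotaf f (x, 0)) = f (shift x) := by
  refine IsLeast.csInf_eq ⟨⟨hpos, ?_⟩, fun k ⟨hk, hkX⟩ => ?_⟩
  · rw [shift_iterate_return x hpos]
    exact mem_Xzero_iotaf hsx
  · by_contra! hlt
    have hlevel := snd_apply_zero_of_mem_Xzero hkX
    rw [shift_iterate_iotaf, sigmaf_iterate_base x hk hlt.le] at hlevel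
    have : f (shift x) - k = 0 := hlevel
    omega

lemma shift_iterate_frt_iotaf (hsx : shift x ∈ X) (hpos : 0 < f (shift x)) :
    shift^[frt X f (iotaf f (x, 0))] (iotaf f (x, 0)) = iotaf f (shift x, 0) := by
  rw [frt_iotaf hsx hpos, shift_iterate_return x hpos]

lemma frt_eqOn (hX : MapsTo shift X X) (hfpos : ∀ x ∈ X, 0 < f x) :
    EqOn (frt X f) (fun w => (w 1).2 + 1) (Xzero X f) := by
  rintro w ⟨x, hx, rfl⟩
  have hpos := hfpos _ (hX hx)
  simp only [frt_iotaf (hX hx) hpos, iotaf_apply_one]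
  omega

end Return

-- The second letter of `ι (x, 0)` is `f (σ x) - 1`, so equal itineraries return to level `0`
-- at the same time.
lemma iotaf_shift_eq_of_iotaf_eq {x y : ℕ → A} (hx : 0 < f (shift x)) (hy : 0 < f (shift y))
    (h : iotaf f (x, 0) = iotaf f (y, 0)) : iotaf f (shift x, 0) = iotaf f (shift y, 0) := by
  have hfxy : f (shift x) = f (shift y) := by
    have h1 := congrArg Prod.snd (congrFun h 1)
    simp only [iotaf_apply_one] at h1
    omega
  rw [← shift_iterate_return x hx, ← shift_iterate_return y hy, h, hfxy]

lemma injOn_iotaf {X : Set (ℕ → A)} (hX : MapsTo shift X X) (hfpos : ∀ x ∈ X, 0 < f x) :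
    InjOn (fun x => iotaf f (x, 0)) X := by
  suffices ∀ n, ∀ x ∈ X, ∀ y ∈ X, iotaf f (x, 0) = iotaf f (y, 0) → x n = y n from
    fun x hx y hy h => funext fun n => this n x hx y hy h
  intro n
  induction n with
  | zero => exact fun x _ y _ h => congrArg Prod.fst (congrFun h 0)
  | succ n ih =>
    intro x hx y hy h
    exact ih _ (hX hx) _ (hX hy)
      (iotaf_shift_eq_of_iotaf_eq (hfpos _ (hX hx)) (hfpos _ (hX hy)) h)

lemma exists_shift_iterate_eq_of_mem_Xup {X : Set (ℕ → A)} (hinv : shift '' X = X)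
    {z : ℕ → A × ℕ} (hz : z ∈ Xup X f) : ∃ w ∈ Xzero X f, ∃ k : ℕ, shift^[k] w = z := by
  obtain ⟨⟨x, i⟩, ⟨hx, hi : i < f x⟩, rfl⟩ := hz
  obtain ⟨y, hy, rfl⟩ : x ∈ shift '' X := hinv.symm ▸ hx
  refine ⟨_, mem_Xzero_iotaf hy, f (shift y) - i, ?_⟩
  rw [shift_iterate_iotaf, sigmaf_iterate_base y (by omega) (by omega),
    Nat.sub_sub_self hi.le]

lemma mapsTo_sigmaf {X : Set (ℕ → A)} (hX : MapsTo shift X X) :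
    MapsTo (sigmaf f) (Prod.fst ⁻¹' X) (Prod.fst ⁻¹' X) := by
  intro p hp
  unfold sigmaf
  split_ifs
  exacts [hX hp, hp]

lemma Xzero_eq_inter_Xup {X : Set (ℕ → A)} (hfpos : ∀ x ∈ X, 0 < f x) :
    Xzero X f = {w | (w 0).2 = 0} ∩ Xup X f := by
  ext w
  constructor
  · rintro ⟨x, hx, rfl⟩
    exact ⟨rfl, ⟨(x, 0), ⟨hx, hfpos x hx⟩, rfl⟩⟩
  · rintro ⟨hw0, ⟨⟨x, i⟩, ⟨hx, -⟩, rfl⟩⟩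
    obtain rfl : i = 0 := hw0
    exact mem_Xzero_iotaf hx

section Topology

variable [TopologicalSpace A] {X : Set (ℕ → A)}

lemma continuous_shift : Continuous (shift : (ℕ → A) → ℕ → A) :=
  continuous_pi fun n => continuous_apply (n + 1)

lemma continuousOn_sigmaf (hX : MapsTo shift X X) (hf : ContinuousOn f X) :
    ContinuousOn (sigmaf f) (Prod.fst ⁻¹' X) := by
  have hclopen : IsClopen {p : (ℕ → A) × ℕ | p.2 = 0} :=
    (isClopen_discrete {0}).preimage continuous_snd
  have hfshift : ContinuousOn (fun p : (ℕ → A) × ℕ => f (shift p.1)) (Prod.fst ⁻¹' X) :=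
    hf.comp (continuous_shift.comp continuous_fst).continuousOn fun p hp => hX hp
  refine ContinuousOn.if (by simp [hclopen.frontier_eq]) ?_ ?_
  · exact ((continuous_shift.comp continuous_fst).continuousOn.prodMk
      ((continuous_of_discreteTopology (f := fun n : ℕ => n - 1)).comp_continuousOn
        hfshift)).mono inter_subset_left
  · exact (continuous_fst.prodMk
      ((continuous_of_discreteTopology (f := fun n : ℕ => n - 1)).comp
        continuous_snd)).continuousOn

lemma continuousOn_iotaf (hX : MapsTo shift X X) (hf : ContinuousOn f X) :
    ContinuousOn (fun x => iotaf f (x, 0)) X := by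
  refine continuousOn_pi.2 fun t => ?_
  have h : ContinuousOn (fun x => (sigmaf f)^[t] (x, 0)) X :=
    ((continuousOn_sigmaf hX hf).iterate (mapsTo_sigmaf hX) t).comp
      (continuous_id.prodMk continuous_const).continuousOn fun _ hx => hx
  exact (((continuous_apply 0).comp continuous_fst).comp_continuousOn h).prodMk
    (continuous_snd.comp_continuousOn h)

end Topology

end Tower

open Tower

/-- `X₀` is a compact open cross section of `X^f`: every point of `X^f` lies on
the forward orbit of `X₀`; points of `X₀` return to `X₀`; the first-return time
is continuous on `X₀` and equals `f(σ_X(x))` at `ι(x,0)`; and the first-return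
map on `X₀` is conjugate to `(X, σ_X)` via `x ↦ ι_{X_f}(x, 0)`. -/
theorem stmt19 {A : Type*} [Fintype A] [TopologicalSpace A] [DiscreteTopology A]
    (X : Set (ℕ → A)) (hcl : IsClosed X) (hinv : shift '' X = X)
    (f : (ℕ → A) → ℕ) (hf : ContinuousOn f X) (hfpos : ∀ x ∈ X, 0 < f x) :
    IsCompact (Xzero X f) ∧
    (∃ U : Set (ℕ → A × ℕ), IsOpen U ∧ Xzero X f = U ∩ Xup X f) ∧
    (∀ z ∈ Xup X f, ∃ w ∈ Xzero X f, ∃ k : ℕ, shift^[k] w = z) ∧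
    (∀ w ∈ Xzero X f, ∃ k : ℕ, 0 < k ∧ shift^[k] w ∈ Xzero X f) ∧
    ContinuousOn (frt X f) (Xzero X f) ∧
    (∀ x ∈ X, frt X f (iotaf f (x, 0)) = f (shift x)) ∧
    Set.InjOn (fun x => iotaf f (x, 0)) X ∧
    ContinuousOn (fun x => iotaf f (x, 0)) X ∧
    (∀ x ∈ X, shift^[frt X f (iotaf f (x, 0))] (iotaf f (x, 0))
      = iotaf f (shift x, 0)) := by
  have hX : MapsTo shift X X := (mapsTo_image shift X).mono_right hinv.subset
  have hpos : ∀ x ∈ X, 0 < f (shift x) := fun x hx => hfpos _ (hX hx)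
  have hιcont := continuousOn_iotaf hX hf
  refine ⟨hcl.isCompact.image_of_continuousOn hιcont,
    ⟨{w | (w 0).2 = 0}, ?_, Xzero_eq_inter_Xup hfpos⟩,
    fun z hz => exists_shift_iterate_eq_of_mem_Xup hinv hz, ?_, ?_,
    fun x hx => frt_iotaf (hX hx) (hpos x hx), injOn_iotaf hX hfpos, hιcont,
    fun x hx => shift_iterate_frt_iotaf (hX hx) (hpos x hx)⟩
  · exact (isOpen_discrete {0}).preimage (by fun_prop)
  · rintro _ ⟨x, hx, rfl⟩
    refine ⟨f (shift x), hpos x hx, ?_⟩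
    rw [shift_iterate_return x (hpos x hx)]
    exact mem_Xzero_iotaf (hX hx)
  · have hsecond : Continuous fun w : ℕ → A × ℕ => (w 1).2 + 1 :=
      (continuous_of_discreteTopology (f := fun n : ℕ => n + 1)).comp
        (continuous_snd.comp (continuous_apply 1))
    exact hsecond.continuousOn.congr (frt_eqOn hX hfpos)
end
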